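/- arXiv:1403.7121 — 7 statements merged into one kernel-verified Lean document; each statement's English description precedes it below -/
import Mathlib

section
/- Let A be an associative unital F-algebra containing elements K, K⁻¹, J₊, J₋ with K·K⁻¹ = K⁻¹·K = 1. Define the 2×2 matrices over A: ℓ̂ = [[K, 0], [(s − s⁻¹)J₊, K⁻¹]] and ℓ̂†⁻¹ = [[K⁻¹, −(s − s⁻¹)J₋], [0, K]], set ℓ̂₁ = ℓ̂ ⊗ I₂, ℓ̂₂ = I₂ ⊗ ℓ̂ (Kronecker products, 4×4 matrices over A), and similarly ℓ̂†⁻¹₁, ℓ̂†⁻¹₂, and let R be the 4×4 scalar matrix with rows (s,0,0,0), (0,1,0,0), (0, s−s⁻¹, 1, 0), (0,0,0,s). Then the three matrix equations R ℓ̂₁ ℓ̂₂ = ℓ̂₂ ℓ̂₁ R, R ℓ̂†⁻¹₁ ℓ̂†⁻¹₂ = ℓ̂†⁻¹₂ ℓ̂†⁻¹₁ R, and R ℓ̂₁ ℓ̂†⁻¹₂ = ℓ̂†⁻¹₂ ℓ̂₁ R hold if and only if K J₊ K⁻¹ = s J₊, K J₋ K⁻¹ = s⁻¹ J₋, and J₊J₋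 − J₋J₊ = (K² − K⁻²)/(s − s⁻¹). -/
/-!
STATEMENT 0: the RLL relations for the quantum matrices ℓ̂ and ℓ̂†⁻¹ (with the
rescaled quantum R-matrix) are equivalent to the U_q(su(2)) commutation relations.
-/

open Matrix Kronecker

variable {F : Type} [Field F] {A : Type} [Ring A] [Algebra F A]

/-- The quantum matrix ℓ̂ = [[K, 0], [(s − s⁻¹)J₊, K⁻¹]]. -/
def lhat (s : F) (K Ki Jp : A) : Matrix (Fin 2) (Fin 2) A :=
  !![K, 0; (s - s⁻¹) • Jp, Ki]

/-- The quantum matrix ℓ̂†⁻¹ = [[K⁻¹, −(s − s⁻¹)J₋], [0, K]]. -/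
def lhatDagInv (s : F) (K Ki Jm : A) : Matrix (Fin 2) (Fin 2) A :=
  !![Ki, -((s - s⁻¹) • Jm); 0, K]

/-- Kronecker product with the identity on the right: M ⊗ I₂. -/
def emb1 (M : Matrix (Fin 2) (Fin 2) A) : Matrix (Fin 2 × Fin 2) (Fin 2 × Fin 2) A :=
  M ⊗ₖ (1 : Matrix (Fin 2) (Fin 2) A)

/-- Kronecker product with the identity on the left: I₂ ⊗ M. -/
def emb2 (M : Matrix (Fin 2) (Fin 2) A) : Matrix (Fin 2 × Fin 2) (Fin 2 × Fin 2) A :=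
  (1 : Matrix (Fin 2) (Fin 2) A) ⊗ₖ M

/-- The rescaled quantum R-matrix, a scalar 4×4 matrix with rows
(s,0,0,0), (0,1,0,0), (0, s−s⁻¹, 1, 0), (0,0,0,s), indexed by `Fin 2 × Fin 2`
in the Kronecker ordering (i,k) ↦ 2i + k. -/
def Rmat (s : F) (A : Type) [Ring A] [Algebra F A] :
    Matrix (Fin 2 × Fin 2) (Fin 2 × Fin 2) A :=
  Matrix.of fun p r => algebraMap F A
    ((!![s, 0, 0, 0; 0, 1, 0, 0; 0, s - s⁻¹, 1, 0; 0, 0, 0, s] : Matrix (Fin 4) (Fin 4) F)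
      ⟨p.1.val * 2 + p.2.val, by have := p.1.isLt; have := p.2.isLt; omega⟩
      ⟨r.1.val * 2 + r.2.val, by have := r.1.isLt; have := r.2.isLt; omega⟩)


lemma mul_algebraMap' (r : F) (x : A) : x * algebraMap F A r = r • x := by
  rw [← Algebra.commutes, ← Algebra.smul_def]

lemma algebraMap_mul' (r : F) (x : A) : algebraMap F A r * x = r • x :=
  (Algebra.smul_def r x).symm

lemma smul_cancel {c : F} (hc : c ≠ 0) {x y : A} (h : c • x = c • y) : x = y := by
  have h2 := congrArg (fun z => c⁻¹ • z) h
  simpa [smul_smul, inv_mul_cancel₀ hc] using h2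

@[simp] lemma Rmat_00_00 (s : F) : Rmat s A (0,0) (0,0) = algebraMap F A (s) := rfl
@[simp] lemma Rmat_00_01 (s : F) : Rmat s A (0,0) (0,1) = 0 := (show Rmat s A (0,0) (0,1) = algebraMap F A 0 from rfl).trans (map_zero _)
@[simp] lemma Rmat_00_10 (s : F) : Rmat s A (0,0) (1,0) = 0 := (show Rmat s A (0,0) (1,0) = algebraMap F A 0 from rfl).trans (map_zero _)
@[simp] lemma Rmat_00_11 (s : F) : Rmat s A (0,0) (1,1) = 0 := (show Rmat s A (0,0) (1,1) = algebraMap F A 0 from rfl).trans (map_zero _)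
@[simp] lemma Rmat_01_00 (s : F) : Rmat s A (0,1) (0,0) = 0 := (show Rmat s A (0,1) (0,0) = algebraMap F A 0 from rfl).trans (map_zero _)
@[simp] lemma Rmat_01_01 (s : F) : Rmat s A (0,1) (0,1) = 1 := (show Rmat s A (0,1) (0,1) = algebraMap F A 1 from rfl).trans (map_one _)
@[simp] lemma Rmat_01_10 (s : F) : Rmat s A (0,1) (1,0) = 0 := (show Rmat s A (0,1) (1,0) = algebraMap F A 0 from rfl).trans (map_zero _)
@[simp] lemma Rmat_01_11 (s : F) : Rmat s A (0,1) (1,1) = 0 := (show Rmat s A (0,1) (1,1) = algebraMap F A 0 from rfl).trans (map_zero _)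
@[simp] lemma Rmat_10_00 (s : F) : Rmat s A (1,0) (0,0) = 0 := (show Rmat s A (1,0) (0,0) = algebraMap F A 0 from rfl).trans (map_zero _)
@[simp] lemma Rmat_10_01 (s : F) : Rmat s A (1,0) (0,1) = algebraMap F A (s - s⁻¹) := rfl
@[simp] lemma Rmat_10_10 (s : F) : Rmat s A (1,0) (1,0) = 1 := (show Rmat s A (1,0) (1,0) = algebraMap F A 1 from rfl).trans (map_one _)
@[simp] lemma Rmat_10_11 (s : F) : Rmat s A (1,0) (1,1) = 0 := (show Rmat s A (1,0) (1,1) = algebraMap F A 0 from rfl).trans (map_zero _)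
@[simp] lemma Rmat_11_00 (s : F) : Rmat s A (1,1) (0,0) = 0 := (show Rmat s A (1,1) (0,0) = algebraMap F A 0 from rfl).trans (map_zero _)
@[simp] lemma Rmat_11_01 (s : F) : Rmat s A (1,1) (0,1) = 0 := (show Rmat s A (1,1) (0,1) = algebraMap F A 0 from rfl).trans (map_zero _)
@[simp] lemma Rmat_11_10 (s : F) : Rmat s A (1,1) (1,0) = 0 := (show Rmat s A (1,1) (1,0) = algebraMap F A 0 from rfl).trans (map_zero _)
@[simp] lemma Rmat_11_11 (s : F) : Rmat s A (1,1) (1,1) = algebraMap F A (s) := rfl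
set_option maxHeartbeats 1000000 in
theorem rll_relations_iff_uq_su2 (s : F) (hs : s ≠ 0) (hs' : s - s⁻¹ ≠ 0)
    (K Ki Jp Jm : A) (hKKi : K * Ki = 1) (hKiK : Ki * K = 1) :
    (Rmat s A * emb1 (lhat s K Ki Jp) * emb2 (lhat s K Ki Jp)
        = emb2 (lhat s K Ki Jp) * emb1 (lhat s K Ki Jp) * Rmat s A ∧
     Rmat s A * emb1 (lhatDagInv s K Ki Jm) * emb2 (lhatDagInv s K Ki Jm)
        = emb2 (lhatDagInv s K Ki Jm) * emb1 (lhatDagInv s K Ki Jm) * Rmat s A ∧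
     Rmat s A * emb1 (lhat s K Ki Jp) * emb2 (lhatDagInv s K Ki Jm)
        = emb2 (lhatDagInv s K Ki Jm) * emb1 (lhat s K Ki Jp) * Rmat s A)
    ↔
    (K * Jp * Ki = s • Jp ∧
     K * Jm * Ki = s⁻¹ • Jm ∧
     Jp * Jm - Jm * Jp = (s - s⁻¹)⁻¹ • (K ^ 2 - Ki ^ 2)) := by
  constructor
  · rintro ⟨h1, h2, h3⟩
    rw [← Matrix.ext_iff] at h3
    simp only [Rmat_00_00, Rmat_00_01, Rmat_00_10, Rmat_00_11, Rmat_01_00, Rmat_01_01,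
      Rmat_01_10, Rmat_01_11, Rmat_10_00, Rmat_10_01, Rmat_10_10, Rmat_10_11,
      Rmat_11_00, Rmat_11_01, Rmat_11_10, Rmat_11_11,
      emb1, emb2, lhat, lhatDagInv, Matrix.mul_apply, Fintype.sum_prod_type,
      Fin.sum_univ_two, Matrix.kroneckerMap_apply, Matrix.one_apply, Prod.forall,
      Fin.forall_fin_two, Matrix.of_apply, Matrix.cons_val_zero, Matrix.cons_val_one,
      Matrix.head_cons, Matrix.head_fin_const, Matrix.cons_val_fin_one,
      if_true, one_mul, mul_one, zero_mul, mul_zero, add_zero, zero_add,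
      Fin.zero_eq_one_iff, Fin.one_eq_zero_iff, Nat.succ_ne_self, if_false, ite_false,
      Nat.reduceEqDiff, OfNat.ofNat_ne_one, not_false_eq_true, if_neg, one_ne_zero,
      zero_ne_one] at h3
    obtain ⟨⟨⟨⟨-, hA⟩, -⟩, -⟩, ⟨⟨hB, hC⟩, -, hD⟩, -⟩ := h3
    simp only [neg_mul, mul_neg, smul_mul_assoc, mul_smul_comm, algebraMap_mul',
      mul_algebraMap', smul_smul, smul_neg, neg_inj, mul_assoc] at hA hB hC hD
    -- hA : ((s - s⁻¹) * s) • (K * Jm) = (s - s⁻¹) • (Jm * K)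
    -- hB : (s - s⁻¹) • (Jp * Ki) = (s * (s - s⁻¹)) • (Ki * Jp)
    -- hC : -(((s-s⁻¹)*(s-s⁻¹)) • (Jp*Jm)) + (s-s⁻¹) • (K*K)
    --        = -(((s-s⁻¹)*(s-s⁻¹)) • (Jm*Jp)) + (s-s⁻¹) • (Ki*Ki)
    have hJpKi : Jp * Ki = s • (Ki * Jp) := by
      apply smul_cancel hs'
      rw [hB, smul_smul, mul_comm]
    have hKJm : K * Jm = s⁻¹ • (Jm * K) := by
      apply smul_cancel (mul_ne_zero hs' hs)
      rw [hA, smul_smul, mul_assoc, mul_inv_cancel₀ hs, mul_one]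
    have hJmKi : Jm * Ki = s⁻¹ • (Ki * Jm) := by
      apply smul_cancel (mul_ne_zero hs hs')
      rw [← hD, smul_smul, mul_right_comm, mul_inv_cancel₀ hs, one_mul]
    refine ⟨?_, ?_, ?_⟩
    · rw [mul_assoc, hJpKi, mul_smul_comm, ← mul_assoc, hKKi, one_mul]
    · rw [mul_assoc, hJmKi, mul_smul_comm, ← mul_assoc, hKKi, one_mul]
    · apply smul_cancel (mul_ne_zero hs' hs')
      have key : ((s-s⁻¹)*(s-s⁻¹)) • (Jp*Jm) - ((s-s⁻¹)*(s-s⁻¹)) • (Jm*Jp)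
          = (s - s⁻¹) • (K*K) - (s - s⁻¹) • (Ki*Ki) := by
        rw [sub_eq_sub_iff_add_eq_add]
        have h' := congrArg (fun z => (((s-s⁻¹)*(s-s⁻¹)) • (Jp*Jm)
          + ((s-s⁻¹)*(s-s⁻¹)) • (Jm*Jp)) + z) hC
        calc ((s-s⁻¹)*(s-s⁻¹)) • (Jp*Jm) + (s - s⁻¹) • (Ki*Ki)
            = ((s-s⁻¹)*(s-s⁻¹)) • (Jp*Jm) + ((s-s⁻¹)*(s-s⁻¹)) • (Jm*Jp)
              + (-(((s-s⁻¹)*(s-s⁻¹)) • (Jm*Jp)) + (s - s⁻¹) • (Ki*Ki)) := by abel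
          _ = ((s-s⁻¹)*(s-s⁻¹)) • (Jp*Jm) + ((s-s⁻¹)*(s-s⁻¹)) • (Jm*Jp)
              + (-(((s-s⁻¹)*(s-s⁻¹)) • (Jp*Jm)) + (s - s⁻¹) • (K*K)) := by rw [← hC]
          _ = (s - s⁻¹) • (K*K) + ((s-s⁻¹)*(s-s⁻¹)) • (Jm*Jp) := by abel
      rw [smul_sub, key, smul_smul, mul_assoc, mul_inv_cancel₀ hs', mul_one,
        pow_two, pow_two, smul_sub]
  · rintro ⟨r1, r2, r3⟩
    have hkey : (s - s⁻¹) * s = s ^ 2 - 1 := by rw [sub_mul, inv_mul_cancel₀ hs, sq]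
    have h21 : s ^ 2 - 1 ≠ 0 := by rw [← hkey]; exact mul_ne_zero hs' hs
    have h21' : s * s - 1 ≠ 0 := by rw [← sq]; exact h21
    have h3s : -s + s ^ 3 ≠ 0 := by
      have e : -s + s ^ 3 = (s ^ 2 - 1) * s := by ring
      rw [e]; exact mul_ne_zero h21 hs
    have R1 : K * Jp = s • (Jp * K) := by
      have h := congrArg (· * K) r1
      simpa [mul_assoc, hKiK, smul_mul_assoc] using h
    have R2 : Jp * Ki = s • (Ki * Jp) := by
      have h := congrArg (Ki * ·) r1
      simpa [← mul_assoc, hKiK, mul_smul_comm] using h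
    have R3 : K * Jm = s⁻¹ • (Jm * K) := by
      have h := congrArg (· * K) r2
      simpa [mul_assoc, hKiK, smul_mul_assoc] using h
    have R4 : Jm * Ki = s⁻¹ • (Ki * Jm) := by
      have h := congrArg (Ki * ·) r2
      simpa [← mul_assoc, hKiK, mul_smul_comm] using h
    have R5 : Jp * Jm = (s - s⁻¹)⁻¹ • (K*K) - (s - s⁻¹)⁻¹ • (Ki*Ki) + Jm * Jp := by
      have h := r3
      rw [sub_eq_iff_eq_add, smul_sub, pow_two, pow_two] at h
      exact h
    refine ⟨?_, ?_, ?_⟩ <;>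
    · rw [← Matrix.ext_iff]
      simp only [Rmat_00_00, Rmat_00_01, Rmat_00_10, Rmat_00_11, Rmat_01_00, Rmat_01_01,
        Rmat_01_10, Rmat_01_11, Rmat_10_00, Rmat_10_01, Rmat_10_10, Rmat_10_11,
        Rmat_11_00, Rmat_11_01, Rmat_11_10, Rmat_11_11,
        emb1, emb2, lhat, lhatDagInv, Matrix.mul_apply, Fintype.sum_prod_type,
        Fin.sum_univ_two, Matrix.kroneckerMap_apply, Matrix.one_apply, Prod.forall,
        Fin.forall_fin_two, Matrix.of_apply, Matrix.cons_val_zero, Matrix.cons_val_one,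
        Matrix.head_cons, Matrix.head_fin_const, Matrix.cons_val_fin_one,
        if_true, one_mul, mul_one, zero_mul, mul_zero, add_zero, zero_add,
        Fin.zero_eq_one_iff, Fin.one_eq_zero_iff, Nat.succ_ne_self, if_false, ite_false,
        Nat.reduceEqDiff, OfNat.ofNat_ne_one, not_false_eq_true, if_neg, one_ne_zero,
        zero_ne_one]
      and_intros <;>
        simp only [neg_mul, mul_neg, smul_mul_assoc, mul_smul_comm, algebraMap_mul',
          mul_algebraMap', mul_assoc, R1, R2, R3, R4, R5, hKKi, hKiK, smul_smul,
          smul_add, smul_sub, smul_neg, mul_one, one_mul] <;>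
        (match_scalars <;> (field_simp [hs, h21, h21', h3s]; (try field_simp [hs, h21, h21', h3s]); (try ring)))
end

section
/- Let A be an associative unital F-algebra containing a U_q(su(2)) triple K, K⁻¹, J₊, J₋, and let t₁, t₀, t₋₁ be the components of the vector operator t. Then t transforms as a vector operator under the adjoint action of U_q(su(2)): (i) K t_A K⁻¹ = s^A t_A for A = −1, 0, 1; (ii) J₊ t₋₁ K⁻¹ − s K⁻¹ t₋₁ J₊ = c·t₀, J₊ t₀ K⁻¹ − s K⁻¹ t₀ J₊ = c·t₁, and J₊ t₁ K⁻¹ − s K⁻¹ t₁ J₊ = 0; (iii) J₋ t₁ K⁻¹ − s⁻¹ K⁻¹ t₁ J₋ = c·t₀, J₋ t₀ K⁻¹ − s⁻¹ K⁻¹ t₀ J₋ = c·t₋₁, and J₋ t₋₁ K⁻¹ − s⁻¹ K⁻¹ t₋₁ J₋ = 0. -/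
/-!
Conjugation by `K` is an algebra automorphism scaling `J₊`, `J₋` by `s`, `s⁻¹`; this gives (i),
and for a `K`-invariant `x` it reduces `J x K⁻¹ - s^{±1} K⁻¹ x J` to the commutator `[J, x] K⁻¹`.
The one genuine computation is `[J₊, X] = -(s + s⁻¹) K J₊ K` for `X = s⁻¹ J₊J₋ - s J₋J₊`
(so `t₀ = -c⁻¹ X`): it follows from `[J₊, X] = s⁻¹ J₊ C - s C J₊` with `C = [J₊, J₋]`,
into which the defining relation for `C` is substituted; `c² = s + s⁻¹` then gives `c t₁`.
The relations are invariant under `J₊ ↔ J₋, s ↔ s⁻¹`, which maps `(t₁, t₀, t₋₁)` to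
`(-t₋₁, -t₀, -t₁)`, so (iii) is (ii) for the swapped triple.
-/

variable {F : Type} [Field F] {A : Type} [Ring A] [Algebra F A]

def qAd (Ki J : A) (b : F) : A →ₗ[F] A where
  toFun x := J * x * Ki - b • (Ki * x * J)
  map_add' x y := by simp only [mul_add, add_mul, smul_add]; abel
  map_smul' r x := by
    simp only [mul_smul_comm, smul_mul_assoc, smul_sub, smul_comm b r, RingHom.id_apply]

theorem qAd_apply (Ki J : A) (b : F) (x : A) : qAd Ki J b x = J * x * Ki - b • (Ki * x * J) :=
  rfl

theorem ne_zero_of_sub_inv_ne_zero {s : F} (hs : s - s⁻¹ ≠ 0) : s ≠ 0 :=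
  fun h => hs (by simp [h])

section Conjugation

variable {K Ki x : A} {a : F}

theorem conj_mul_eq_mul_conj (hKiK : Ki * K = 1) (x y : A) :
    K * (x * y) * Ki = (K * x * Ki) * (K * y * Ki) := by
  simp only [mul_assoc, ← mul_assoc Ki, hKiK, one_mul]

theorem mul_eq_smul_mul_of_conj (hKiK : Ki * K = 1) (hx : K * x * Ki = a • x) :
    K * x = a • (x * K) := by
  rw [← smul_mul_assoc, ← hx, mul_assoc _ Ki, hKiK, mul_one]

theorem mul_inv_eq_smul_inv_mul_of_conj (hKiK : Ki * K = 1) (hx : K * x * Ki = a • x) :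
    x * Ki = a • (Ki * x) := by
  rw [← mul_smul_comm, ← hx, ← mul_assoc, ← mul_assoc, hKiK, one_mul]

theorem qAd_of_conj_eq_self (hKiK : Ki * K = 1) {b : F} {J : A}
    (hJ : K * J * Ki = b • J) (hx : K * x * Ki = x) : qAd Ki J b x = (J * x - x * J) * Ki := by
  have hx' : Ki * x = x * Ki := by
    simpa using (mul_inv_eq_smul_inv_mul_of_conj (a := (1 : F)) hKiK (by rwa [one_smul])).symm
  rw [qAd_apply, hx', mul_assoc x, ← mul_smul_comm, ← mul_inv_eq_smul_inv_mul_of_conj hKiK hJ,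
    sub_mul, mul_assoc x]

end Conjugation

structure IsUqTriple (s : F) (K Ki Jp Jm : A) : Prop where
  mul_inv : K * Ki = 1
  inv_mul : Ki * K = 1
  conj_Jp : K * Jp * Ki = s • Jp
  conj_Jm : K * Jm * Ki = s⁻¹ • Jm
  comm : Jp * Jm - Jm * Jp = (s - s⁻¹)⁻¹ • (K ^ 2 - Ki ^ 2)

namespace IsUqTriple

variable {s : F} {K Ki Jp Jm : A}

theorem swap (T : IsUqTriple s K Ki Jp Jm) : IsUqTriple s⁻¹ K Ki Jm Jp where
  mul_inv := T.mul_inv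
  inv_mul := T.inv_mul
  conj_Jp := T.conj_Jm
  conj_Jm := by rw [inv_inv]; exact T.conj_Jp
  comm := by rw [inv_inv, ← neg_sub s, inv_neg, neg_smul, ← T.comm, neg_sub]

theorem conj_K_mul_Jp (T : IsUqTriple s K Ki Jp Jm) : K * (K * Jp) * Ki = s • (K * Jp) := by
  rw [mul_assoc, T.conj_Jp, mul_smul_comm]

theorem conj_Jp_mul_Jm (T : IsUqTriple s K Ki Jp Jm) (hs : s ≠ 0) :
    K * (Jp * Jm) * Ki = Jp * Jm := by
  rw [conj_mul_eq_mul_conj T.inv_mul, T.conj_Jp, T.conj_Jm, smul_mul_smul_comm,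
    mul_inv_cancel₀ hs, one_smul]

theorem conj_qcomm (T : IsUqTriple s K Ki Jp Jm) (hs : s ≠ 0) :
    K * (s⁻¹ • (Jp * Jm) - s • (Jm * Jp)) * Ki = s⁻¹ • (Jp * Jm) - s • (Jm * Jp) := by
  simp only [mul_sub, sub_mul, mul_smul_comm, smul_mul_assoc, T.conj_Jp_mul_Jm hs,
    T.swap.conj_Jp_mul_Jm (inv_ne_zero hs)]

theorem qAd_Jp_K_mul_Jm (T : IsUqTriple s K Ki Jp Jm) :
    qAd Ki Jp s (K * Jm) = s⁻¹ • (Jp * Jm) - s • (Jm * Jp) := by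
  rw [qAd_apply, mul_assoc Jp, T.conj_Jm, mul_smul_comm, ← mul_assoc Ki, T.inv_mul, one_mul]

theorem qAd_Jp_K_mul_Jp (T : IsUqTriple s K Ki Jp Jm) : qAd Ki Jp s (K * Jp) = 0 := by
  rw [qAd_apply, mul_assoc Jp, T.conj_Jp, mul_smul_comm, ← mul_assoc Ki, T.inv_mul, one_mul,
    sub_self]

theorem Jp_mul_qcomm_sub (T : IsUqTriple s K Ki Jp Jm) (hs : s - s⁻¹ ≠ 0) :
    Jp * (s⁻¹ • (Jp * Jm) - s • (Jm * Jp)) - (s⁻¹ • (Jp * Jm) - s • (Jm * Jp)) * Jp =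
      -((s + s⁻¹) • (K * Jp * K)) := by
  have hs0 := ne_zero_of_sub_inv_ne_zero hs
  have hd : s ^ 2 - 1 ≠ 0 := by contrapose! hs; field_simp; linear_combination hs
  have hC : Jp * (s⁻¹ • (Jp * Jm) - s • (Jm * Jp)) - (s⁻¹ • (Jp * Jm) - s • (Jm * Jp)) * Jp =
      s⁻¹ • (Jp * (Jp * Jm - Jm * Jp)) - s • ((Jp * Jm - Jm * Jp) * Jp) := by
    simp only [mul_sub, sub_mul, mul_smul_comm, smul_mul_assoc, mul_assoc]
    module
  have hKJp := mul_eq_smul_mul_of_conj T.inv_mul T.conj_Jp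
  have hKiJp := mul_inv_eq_smul_inv_mul_of_conj T.inv_mul T.conj_Jp
  have hK2 : K ^ 2 * Jp = s ^ 2 • (Jp * K ^ 2) := by
    rw [sq, mul_assoc, hKJp, mul_smul_comm, ← mul_assoc, hKJp, smul_mul_assoc, smul_smul, ← sq,
      mul_assoc, ← sq]
  have hKi2 : Jp * Ki ^ 2 = s ^ 2 • (Ki ^ 2 * Jp) := by
    rw [sq, ← mul_assoc, hKiJp, smul_mul_assoc, mul_assoc, hKiJp, mul_smul_comm, smul_smul, ← sq,
      ← mul_assoc, ← sq]
  have hKJpK : K * Jp * K = s • (Jp * K ^ 2) := by rw [hKJp, smul_mul_assoc, mul_assoc, ← sq]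
  rw [hC, T.comm, hKJpK]
  simp only [mul_smul_comm, smul_mul_assoc, mul_sub, sub_mul, hK2, hKi2]
  match_scalars <;> field_simp <;> ring

theorem qAd_Jp_qcomm (T : IsUqTriple s K Ki Jp Jm) (hs : s - s⁻¹ ≠ 0) :
    qAd Ki Jp s (s⁻¹ • (Jp * Jm) - s • (Jm * Jp)) = -((s + s⁻¹) • (K * Jp)) := by
  have hs0 := ne_zero_of_sub_inv_ne_zero hs
  rw [qAd_of_conj_eq_self T.inv_mul T.conj_Jp (T.conj_qcomm hs0), T.Jp_mul_qcomm_sub hs,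
    neg_mul, smul_mul_assoc, mul_assoc, T.mul_inv, mul_one]

end IsUqTriple

theorem t_is_vector_operator_general (s c : F) (hs' : s - s⁻¹ ≠ 0)
    (hc : c ≠ 0) (hc2 : c ^ 2 = s + s⁻¹)
    (K Ki Jp Jm : A)
    (hKKi : K * Ki = 1) (hKiK : Ki * K = 1)
    (hp : K * Jp * Ki = s • Jp) (hm : K * Jm * Ki = s⁻¹ • Jm)
    (hcomm : Jp * Jm - Jm * Jp = (s - s⁻¹)⁻¹ • (K ^ 2 - Ki ^ 2))
    (t1 t0 tm1 : A)
    (ht1 : t1 = K * Jp)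
    (ht0 : t0 = -(c⁻¹ • (s⁻¹ • (Jp * Jm) - s • (Jm * Jp))))
    (htm1 : tm1 = -(K * Jm)) :
    -- (i) action of K
    (K * t1 * Ki = s • t1 ∧ K * t0 * Ki = t0 ∧ K * tm1 * Ki = s⁻¹ • tm1) ∧
    -- (ii) adjoint action of J₊
    (Jp * tm1 * Ki - s • (Ki * tm1 * Jp) = c • t0 ∧
     Jp * t0 * Ki - s • (Ki * t0 * Jp) = c • t1 ∧
     Jp * t1 * Ki - s • (Ki * t1 * Jp) = 0) ∧
    -- (iii) adjoint action of J₋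
    (Jm * t1 * Ki - s⁻¹ • (Ki * t1 * Jm) = c • t0 ∧
     Jm * t0 * Ki - s⁻¹ • (Ki * t0 * Jm) = c • tm1 ∧
     Jm * tm1 * Ki - s⁻¹ • (Ki * tm1 * Jm) = 0) := by
  have T : IsUqTriple s K Ki Jp Jm := ⟨hKKi, hKiK, hp, hm, hcomm⟩
  have hs := ne_zero_of_sub_inv_ne_zero hs'
  have hs'' : s⁻¹ - s⁻¹⁻¹ ≠ 0 := by rwa [inv_inv, ← neg_sub, neg_ne_zero]
  have hc' : c⁻¹ * (s + s⁻¹) = c := by rw [← hc2, sq, inv_mul_cancel_left₀ hc]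
  have hqcomm : s⁻¹ • (Jp * Jm) - s • (Jm * Jp) = -(s⁻¹⁻¹ • (Jm * Jp) - s⁻¹ • (Jp * Jm)) := by
    rw [inv_inv, neg_sub]
  subst ht1 ht0 htm1
  simp only [← qAd_apply]
  refine ⟨⟨T.conj_K_mul_Jp, ?_, ?_⟩, ⟨?_, ?_, T.qAd_Jp_K_mul_Jp⟩, ⟨?_, ?_, ?_⟩⟩
  · rw [mul_neg, neg_mul, mul_smul_comm, smul_mul_assoc, T.conj_qcomm hs]
  · rw [mul_neg, neg_mul, smul_neg, T.swap.conj_K_mul_Jp]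
  · rw [map_neg, T.qAd_Jp_K_mul_Jm, smul_neg, smul_inv_smul₀ hc]
  · rw [map_neg, map_smul, T.qAd_Jp_qcomm hs', smul_neg, neg_neg, smul_smul, hc']
  · rw [T.swap.qAd_Jp_K_mul_Jm, smul_neg, smul_inv_smul₀ hc, hqcomm, neg_neg]
  · rw [hqcomm, smul_neg, neg_neg, map_smul, T.swap.qAd_Jp_qcomm hs'', smul_neg, smul_smul,
      inv_inv, add_comm s⁻¹, hc', smul_neg]
  · rw [map_neg, T.swap.qAd_Jp_K_mul_Jp, neg_zero]

theorem t_is_vector_operator (s c : F) (hs : s ≠ 0) (hs' : s - s⁻¹ ≠ 0)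
    (hc : c ≠ 0) (hc2 : c ^ 2 = s + s⁻¹)
    (K Ki Jp Jm : A)
    (hKKi : K * Ki = 1) (hKiK : Ki * K = 1)
    (hp : K * Jp * Ki = s • Jp) (hm : K * Jm * Ki = s⁻¹ • Jm)
    (hcomm : Jp * Jm - Jm * Jp = (s - s⁻¹)⁻¹ • (K ^ 2 - Ki ^ 2))
    (t1 t0 tm1 : A)
    (ht1 : t1 = K * Jp)
    (ht0 : t0 = -(c⁻¹ • (s⁻¹ • (Jp * Jm) - s • (Jm * Jp))))
    (htm1 : tm1 = -(K * Jm)) :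
    -- (i) action of K
    (K * t1 * Ki = s • t1 ∧ K * t0 * Ki = t0 ∧ K * tm1 * Ki = s⁻¹ • tm1) ∧
    -- (ii) adjoint action of J₊
    (Jp * tm1 * Ki - s • (Ki * tm1 * Jp) = c • t0 ∧
     Jp * t0 * Ki - s • (Ki * t0 * Jp) = c • t1 ∧
     Jp * t1 * Ki - s • (Ki * t1 * Jp) = 0) ∧
    -- (iii) adjoint action of J₋
    (Jm * t1 * Ki - s⁻¹ • (Ki * t1 * Jm) = c • t0 ∧
     Jm * t0 * Ki - s⁻¹ • (Ki * t0 * Jm) = c • tm1 ∧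
     Jm * tm1 * Ki - s⁻¹ • (Ki * tm1 * Jm) = 0) :=
  t_is_vector_operator_general s c hs' hc hc2 K Ki Jp Jm hKKi hKiK hp hm hcomm t1 t0 tm1 ht1 ht0
    htm1
end

section
/- Let A be an associative unital F-algebra containing a U_q(su(2)) triple K, K⁻¹, J₊, J₋, and let t^op₁, t^op₀, t^op₋₁ be the components of the operator t^op. Then t^op transforms as a vector under the coadjoint action of U_q(su(2)): (i) K⁻¹ t^op_A K = s^{−A} t^op_A for A = −1, 0, 1; (ii) −s J₊ t^op₋₁ K + K t^op₋₁ J₊ = c·t^op₀, −s J₊ t^op₀ K + K t^op₀ J₊ = c·t^op₁, and −s J₊ t^op₁ K + K t^op₁ J₊ = 0; (iii) −s⁻¹ J₋ t^op₁ K + K t^op₁ J₋ = c·t^op₀, −s⁻¹ J₋ t^op₀ K + K t^op₀ J₋ = c·t^op₋₁, and −s⁻¹ J₋ t^op₋₁ K + K t^op₋₁ J₋ = 0. -/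
/-!
Conjugation by `K⁻¹` multiplies `J₊` and `J₋` by `s⁻¹` and `s`, so `t^op₁, t^op₀, t^op₋₁` have
weights `s⁻¹, 1, s`: this is (i). On an element `X` commuting with `K` the `J₊`-action is
`s [X, J₊] K`. For `X = c t^op₀ = s J₊J₋ - s⁻¹ J₋J₊` this is `s (s⁻¹ H J₊ - s J₊ H) K` with
`H = [J₊, J₋] = (K² - K⁻²)/(s - s⁻¹)`, and moving `J₊` past `K^{±2}` turns it into
`(s + s⁻¹) J₊K⁻¹ = c² t^op₁`; the other two `J₊`-identities only use `K J₊ K⁻¹ = s J₊`.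
The relations are invariant under `(s, J₊, J₋) ↦ (s⁻¹, J₋, J₊)`, which turns the `J₊`-action
into the `J₋`-action and `(t^op₁, t^op₀, t^op₋₁)` into `-(t^op₋₁, t^op₀, t^op₁)`, so (iii)
follows from (ii).
-/

section Conjugation

variable {R A : Type*} [CommSemiring R] [Semiring A] [Algebra R A] {K Ki X Y : A} {a : R}

theorem mul_eq_smul_mul_of_mul_mul_eq_smul (hKiK : Ki * K = 1) (h : K * X * Ki = a • X) :
    K * X = a • (X * K) := by
  rw [← smul_mul_assoc, ← h, mul_assoc _ Ki, hKiK, mul_one]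

theorem pow_mul_eq_smul_mul_pow (h : K * X = a • (X * K)) (n : ℕ) :
    K ^ n * X = a ^ n • (X * K ^ n) := by
  induction n with
  | zero => simp
  | succ n ih =>
    rw [pow_succ, mul_assoc, h, mul_smul_comm, ← mul_assoc, ih, smul_mul_assoc, smul_smul,
      pow_succ', mul_assoc]

theorem conj_mul_distrib (hKKi : K * Ki = 1) :
    Ki * (X * Y) * K = Ki * X * K * (Ki * Y * K) := by
  simp only [mul_assoc, ← mul_assoc K Ki, hKKi, one_mul]

end Conjugation

theorem mul_mul_eq_inv_smul_of_mul_mul_eq_smul {R A : Type*} [Semifield R] [Semiring A]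
    [Algebra R A] {K Ki X : A} {a : R} (hKiK : Ki * K = 1) (ha : a ≠ 0) (h : K * X * Ki = a • X) :
    Ki * X * K = a⁻¹ • X :=
  calc Ki * X * K = a⁻¹ • (a • (Ki * X * K)) := (inv_smul_smul₀ ha _).symm
    _ = a⁻¹ • (Ki * (K * X * Ki) * K) := by rw [h, mul_smul_comm, smul_mul_assoc]
    _ = a⁻¹ • X := by simp only [mul_assoc, ← mul_assoc Ki K, hKiK, one_mul, mul_one]

theorem qCommutator_commutator {R A : Type*} [CommRing R] [Ring A] [Algebra R A] (s t : R)
    (X Y : A) :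
    (s • (X * Y) - t • (Y * X)) * X - X * (s • (X * Y) - t • (Y * X)) =
      t • ((X * Y - Y * X) * X) - s • (X * (X * Y - Y * X)) := by
  simp only [sub_mul, mul_sub, smul_mul_assoc, mul_smul_comm, mul_assoc, smul_sub]
  abel

section UqSu2

variable {F A : Type*} [Field F] [Ring A] [Algebra F A]

/-- The coadjoint action of `J₊` is `qCoad s K J₊`, that of `J₋` is `qCoad s⁻¹ K J₋`. -/
def qCoad (s : F) (K J : A) : A →ₗ[F] A where
  toFun X := -(s • (J * X * K)) + K * X * J
  map_add' X Y := by simp only [mul_add, add_mul, smul_add]; abel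
  map_smul' a X := by
    simp only [mul_smul_comm, smul_mul_assoc, smul_comm s a, smul_add, smul_neg, RingHom.id_apply]

theorem qCoad_apply (s : F) (K J X : A) : qCoad s K J X = -(s • (J * X * K)) + K * X * J := rfl

theorem qCoad_of_commute {s : F} {K J X : A} (hJ : K * J = s • (J * K)) (hX : Commute K X) :
    qCoad s K J X = s • ((X * J - J * X) * K) := by
  rw [qCoad_apply, hX.eq, mul_assoc X, hJ, mul_smul_comm, sub_mul, smul_sub]
  simp only [mul_assoc]
  abel

structure IsUqSu2Triple (s : F) (K Ki Jp Jm : A) : Prop where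
  mul_inv : K * Ki = 1
  inv_mul : Ki * K = 1
  conj_Jp : K * Jp * Ki = s • Jp
  conj_Jm : K * Jm * Ki = s⁻¹ • Jm
  comm : Jp * Jm - Jm * Jp = (s - s⁻¹)⁻¹ • (K ^ 2 - Ki ^ 2)

def tOpZero (s c : F) (Jp Jm : A) : A := c⁻¹ • (s • (Jp * Jm) - s⁻¹ • (Jm * Jp))

theorem tOpZero_inv_swap (s c : F) (Jp Jm : A) : tOpZero s⁻¹ c Jm Jp = -tOpZero s c Jp Jm := by
  rw [tOpZero, tOpZero, inv_inv, ← smul_neg, neg_sub]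

namespace IsUqSu2Triple

variable {s c : F} {K Ki Jp Jm : A}

theorem swap (h : IsUqSu2Triple s K Ki Jp Jm) : IsUqSu2Triple s⁻¹ K Ki Jm Jp where
  mul_inv := h.mul_inv
  inv_mul := h.inv_mul
  conj_Jp := h.conj_Jm
  conj_Jm := by rw [inv_inv, h.conj_Jp]
  comm := by rw [inv_inv, ← neg_sub s, inv_neg, neg_smul, ← h.comm, neg_sub]

theorem K_mul_Jp (h : IsUqSu2Triple s K Ki Jp Jm) : K * Jp = s • (Jp * K) :=
  mul_eq_smul_mul_of_mul_mul_eq_smul h.inv_mul h.conj_Jp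

theorem inv_conj_Jp (h : IsUqSu2Triple s K Ki Jp Jm) (hs : s ≠ 0) : Ki * Jp * K = s⁻¹ • Jp :=
  mul_mul_eq_inv_smul_of_mul_mul_eq_smul h.inv_mul hs h.conj_Jp

theorem inv_conj_Jm (h : IsUqSu2Triple s K Ki Jp Jm) (hs : s ≠ 0) : Ki * Jm * K = s • Jm := by
  simpa using h.swap.inv_conj_Jp (inv_ne_zero hs)

theorem Ki_mul_Jp (h : IsUqSu2Triple s K Ki Jp Jm) (hs : s ≠ 0) : Ki * Jp = s⁻¹ • (Jp * Ki) :=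
  mul_eq_smul_mul_of_mul_mul_eq_smul h.mul_inv (h.inv_conj_Jp hs)

theorem inv_conj_Jp_mul_Ki (h : IsUqSu2Triple s K Ki Jp Jm) (hs : s ≠ 0) :
    Ki * (Jp * Ki) * K = s⁻¹ • (Jp * Ki) := by
  rw [conj_mul_distrib h.mul_inv, h.inv_conj_Jp hs, mul_assoc Ki, h.inv_mul, mul_one,
    smul_mul_assoc]

theorem inv_conj_neg_Jm_mul_Ki (h : IsUqSu2Triple s K Ki Jp Jm) (hs : s ≠ 0) :
    Ki * -(Jm * Ki) * K = s • -(Jm * Ki) := by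
  simpa using h.swap.inv_conj_Jp_mul_Ki (inv_ne_zero hs)

theorem inv_conj_tOpZero (h : IsUqSu2Triple s K Ki Jp Jm) (hs : s ≠ 0) :
    Ki * tOpZero s c Jp Jm * K = tOpZero s c Jp Jm := by
  simp only [tOpZero, mul_sub, sub_mul, mul_smul_comm, smul_mul_assoc,
    conj_mul_distrib h.mul_inv, h.inv_conj_Jp hs, h.inv_conj_Jm hs, smul_smul]
  rw [mul_inv_cancel₀ hs, inv_mul_cancel₀ hs, mul_one, mul_one]

theorem commute_tOpZero (h : IsUqSu2Triple s K Ki Jp Jm) (hs : s ≠ 0) :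
    Commute K (tOpZero s c Jp Jm) := by
  calc K * tOpZero s c Jp Jm = K * (Ki * tOpZero s c Jp Jm * K) := by
        rw [h.inv_conj_tOpZero hs]
    _ = tOpZero s c Jp Jm * K := by simp only [← mul_assoc, h.mul_inv, one_mul]

theorem qCoad_Jp_Jp_mul_Ki (h : IsUqSu2Triple s K Ki Jp Jm) : qCoad s K Jp (Jp * Ki) = 0 := by
  rw [qCoad_apply, mul_assoc Jp, mul_assoc Jp, h.inv_mul, mul_one, ← mul_assoc K, h.conj_Jp,
    smul_mul_assoc, neg_add_cancel]

theorem qCoad_Jp_neg_Jm_mul_Ki (h : IsUqSu2Triple s K Ki Jp Jm) (hc : c ≠ 0) :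
    qCoad s K Jp (-(Jm * Ki)) = c • tOpZero s c Jp Jm := by
  rw [qCoad_apply, mul_neg, neg_mul, mul_neg, neg_mul, smul_neg, neg_neg, ← mul_assoc K Jm Ki,
    h.conj_Jm, mul_assoc Jp, mul_assoc Jm, h.inv_mul, mul_one, smul_mul_assoc,
    ← sub_eq_add_neg, tOpZero, smul_inv_smul₀ hc]

theorem qCommutator_commutator_Jp (h : IsUqSu2Triple s K Ki Jp Jm) (hs : s ≠ 0)
    (hs' : s - s⁻¹ ≠ 0) :
    (Jp * Jm - Jm * Jp) * Jp - s ^ 2 • (Jp * (Jp * Jm - Jm * Jp)) = (s + s⁻¹) • (Jp * Ki ^ 2) := by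
  have hK := pow_mul_eq_smul_mul_pow h.K_mul_Jp 2
  have hKi := pow_mul_eq_smul_mul_pow (h.Ki_mul_Jp hs) 2
  rw [h.comm, smul_mul_assoc, mul_smul_comm, sub_mul, mul_sub, hK, hKi]
  have hs2 : s ^ 2 - 1 ≠ 0 := by
    rw [show s ^ 2 - 1 = s * (s - s⁻¹) by field_simp]
    exact mul_ne_zero hs hs'
  match_scalars <;> field_simp <;> ring

theorem qCoad_Jp_tOpZero (h : IsUqSu2Triple s K Ki Jp Jm) (hs : s ≠ 0) (hs' : s - s⁻¹ ≠ 0)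
    (hc : c ≠ 0) (hc2 : c ^ 2 = s + s⁻¹) : qCoad s K Jp (tOpZero s c Jp Jm) = c • (Jp * Ki) := by
  have hcT : c • tOpZero s c Jp Jm = s • (Jp * Jm) - s⁻¹ • (Jm * Jp) := smul_inv_smul₀ hc _
  apply smul_right_injective A hc
  calc c • qCoad s K Jp (tOpZero s c Jp Jm) = qCoad s K Jp (c • tOpZero s c Jp Jm) :=
        (map_smul _ _ _).symm
    _ = s • ((c • tOpZero s c Jp Jm * Jp - Jp * c • tOpZero s c Jp Jm) * K) :=
        qCoad_of_commute h.K_mul_Jp ((h.commute_tOpZero hs).smul_right c)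
    _ = s • ((s⁻¹ • ((Jp * Jm - Jm * Jp) * Jp) - s • (Jp * (Jp * Jm - Jm * Jp))) * K) := by
        rw [hcT, qCommutator_commutator]
    _ = ((Jp * Jm - Jm * Jp) * Jp - s ^ 2 • (Jp * (Jp * Jm - Jm * Jp))) * K := by
        rw [← smul_mul_assoc, smul_sub, smul_smul, smul_smul, mul_inv_cancel₀ hs, one_smul,
          ← sq]
    _ = (s + s⁻¹) • (Jp * Ki ^ 2 * K) := by
        rw [h.qCommutator_commutator_Jp hs hs', smul_mul_assoc]
    _ = c • c • (Jp * Ki) := by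
        rw [smul_smul, ← sq, hc2, sq Ki, mul_assoc, mul_assoc, h.inv_mul, mul_one]

theorem qCoad_Jm_Jp_mul_Ki (h : IsUqSu2Triple s K Ki Jp Jm) (hc : c ≠ 0) :
    qCoad s⁻¹ K Jm (Jp * Ki) = c • tOpZero s c Jp Jm := by
  have := h.swap.qCoad_Jp_neg_Jm_mul_Ki hc
  rwa [map_neg, tOpZero_inv_swap, smul_neg, neg_inj] at this

theorem qCoad_Jm_tOpZero (h : IsUqSu2Triple s K Ki Jp Jm) (hs : s ≠ 0) (hs' : s - s⁻¹ ≠ 0)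
    (hc : c ≠ 0) (hc2 : c ^ 2 = s + s⁻¹) :
    qCoad s⁻¹ K Jm (tOpZero s c Jp Jm) = c • -(Jm * Ki) := by
  have := h.swap.qCoad_Jp_tOpZero (inv_ne_zero hs) (by rwa [inv_inv, ← neg_sub, neg_ne_zero]) hc
    (by rw [inv_inv, hc2, add_comm])
  rw [tOpZero_inv_swap, map_neg, neg_eq_iff_eq_neg] at this
  rw [this, smul_neg]

theorem qCoad_Jm_neg_Jm_mul_Ki (h : IsUqSu2Triple s K Ki Jp Jm) :
    qCoad s⁻¹ K Jm (-(Jm * Ki)) = 0 := by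
  rw [map_neg, h.swap.qCoad_Jp_Jp_mul_Ki, neg_zero]

end IsUqSu2Triple

end UqSu2

variable {F : Type} [Field F] {A : Type} [Ring A] [Algebra F A]

theorem top_is_coadjoint_vector (s c : F) (hs : s ≠ 0) (hs' : s - s⁻¹ ≠ 0)
    (hc : c ≠ 0) (hc2 : c ^ 2 = s + s⁻¹)
    (K Ki Jp Jm : A)
    (hKKi : K * Ki = 1) (hKiK : Ki * K = 1)
    (hp : K * Jp * Ki = s • Jp) (hm : K * Jm * Ki = s⁻¹ • Jm)
    (hcomm : Jp * Jm - Jm * Jp = (s - s⁻¹)⁻¹ • (K ^ 2 - Ki ^ 2))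
    (top1 top0 topm1 : A)
    (htop1 : top1 = Jp * Ki)
    (htop0 : top0 = c⁻¹ • (s • (Jp * Jm) - s⁻¹ • (Jm * Jp)))
    (htopm1 : topm1 = -(Jm * Ki)) :
    -- (i) coadjoint action of K
    (Ki * top1 * K = s⁻¹ • top1 ∧ Ki * top0 * K = top0 ∧ Ki * topm1 * K = s • topm1) ∧
    -- (ii) coadjoint action of J₊
    (-(s • (Jp * topm1 * K)) + K * topm1 * Jp = c • top0 ∧
     -(s • (Jp * top0 * K)) + K * top0 * Jp = c • top1 ∧
     -(s • (Jp * top1 * K)) + K * top1 * Jp = 0) ∧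
    -- (iii) coadjoint action of J₋
    (-(s⁻¹ • (Jm * top1 * K)) + K * top1 * Jm = c • top0 ∧
     -(s⁻¹ • (Jm * top0 * K)) + K * top0 * Jm = c • topm1 ∧
     -(s⁻¹ • (Jm * topm1 * K)) + K * topm1 * Jm = 0) := by
  subst htop1 htop0 htopm1
  have h : IsUqSu2Triple s K Ki Jp Jm := ⟨hKKi, hKiK, hp, hm, hcomm⟩
  exact ⟨⟨h.inv_conj_Jp_mul_Ki hs, h.inv_conj_tOpZero hs, h.inv_conj_neg_Jm_mul_Ki hs⟩,
    ⟨h.qCoad_Jp_neg_Jm_mul_Ki hc, h.qCoad_Jp_tOpZero hs hs' hc hc2, h.qCoad_Jp_Jp_mul_Ki⟩,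
    ⟨h.qCoad_Jm_Jp_mul_Ki hc, h.qCoad_Jm_tOpZero hs hs' hc hc2, h.qCoad_Jm_neg_Jm_mul_Ki⟩⟩
end

section
/- Let R be an associative unital F-algebra containing a U_q(su(2)) triple k, k⁻¹, j₊, j₋, and let τ = (τ₋₁, τ₀, τ₁) and τ' = (τ'₋₁, τ'₀, τ'₁) be two vector operators in R, i.e. triples satisfying (with τ₂ = τ₋₂ = 0 and likewise for τ'): k τ_A k⁻¹ = s^A τ_A, j₊ τ_A k⁻¹ − s k⁻¹ τ_A j₊ = c·τ_{A+1} for A = −1, 0 and = 0 for A = 1, and j₋ τ_A k⁻¹ − s⁻¹ k⁻¹ τ_A j₋ = c·τ_{A−1} for A = 0, 1 and = 0 for A = −1. Then the quantum scalar product O = Σ_{m = −1,0,1} (−1)^{1−m} s^m τ_m τ'_{−m} is a scalar operator: k O k⁻¹ = O, j₊ O k⁻¹ − s k⁻¹ O j₊ = 0, and j₋ O k⁻¹ − s⁻¹ k⁻¹ O j₋ = 0. -/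
/-!
Conjugation by `k` is multiplicative, and on `k`-weight vectors (`k x k⁻¹ = a x`) the twisted
adjoint action `ad x = j x k⁻¹ - t k⁻¹ x j` of a weight-`t` element `j` obeys the twisted Leibniz rule
`ad (x y) = b · ad x · y + a⁻¹ · x · ad y`. Expanding the scalar product with it, the surviving
terms cancel in pairs.
-/

variable {F : Type} [Field F] {R : Type} [Ring R] [Algebra F R]

def twistedAd (ki j : R) (t : F) : R →ₗ[F] R where
  toFun x := j * x * ki - t • (ki * x * j)
  map_add' x y := by simp only [mul_add, add_mul, smul_add]; abel
  map_smul' a x := by simp only [mul_smul_comm, smul_mul_assoc, smul_sub, smul_comm t a]; rfl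

theorem twistedAd_apply (ki j : R) (t : F) (x : R) :
    twistedAd ki j t x = j * x * ki - t • (ki * x * j) := rfl

def quantumScalarProduct (t : F) (xp x0 xm yp y0 ym : R) : R :=
  t • (xp * ym) - x0 * y0 + t⁻¹ • (xm * yp)

theorem quantumScalarProduct_inv (t : F) (xp x0 xm yp y0 ym : R) :
    quantumScalarProduct t⁻¹ xm x0 xp ym y0 yp = quantumScalarProduct t xp x0 xm yp y0 ym := by
  rw [quantumScalarProduct, quantumScalarProduct, inv_inv]
  abel

section Weights

variable {k ki : R} (hkik : ki * k = 1)
include hkik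

theorem mul_inv_eq_inv_mul_conj (x : R) : x * ki = ki * (k * x * ki) := by
  rw [← mul_assoc, ← mul_assoc, hkik, one_mul]

theorem conj_mul_distrib_s9 (x y : R) : k * (x * y) * ki = (k * x * ki) * (k * y * ki) := by
  simp only [mul_assoc, ← mul_assoc ki k, hkik, one_mul]

theorem conj_mul_eq_smul {a b : F} {x y : R} (hx : k * x * ki = a • x) (hy : k * y * ki = b • y) :
    k * (x * y) * ki = (a * b) • (x * y) := by
  rw [conj_mul_distrib_s9 hkik, hx, hy, smul_mul_smul_comm]

theorem twistedAd_mul {j : R} {t a b : F} {x y : R} (ha : a ≠ 0) (hj : k * j * ki = t • j)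
    (hx : k * x * ki = a • x) (hy : k * y * ki = b • y) :
    twistedAd ki j t (x * y) = b • (twistedAd ki j t x * y) + a⁻¹ • (x * twistedAd ki j t y) := by
  have hjxy : j * x * y * ki = b • (j * x * ki * y) := by
    rw [mul_assoc _ y, mul_inv_eq_inv_mul_conj hkik y, hy]; simp only [mul_smul_comm, mul_assoc]
  have hxki : x * ki * y * j = a • (ki * x * y * j) := by
    rw [mul_inv_eq_inv_mul_conj hkik x, hx]; simp only [mul_smul_comm, smul_mul_assoc, mul_assoc]
  have hxjy : x * j * y * ki = (a * t * b) • (ki * x * j * y) := by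
    rw [mul_inv_eq_inv_mul_conj hkik, conj_mul_eq_smul hkik (conj_mul_eq_smul hkik hx hj) hy]
    simp only [mul_smul_comm, mul_assoc]
  simp only [twistedAd_apply, mul_sub, sub_mul, smul_mul_assoc, mul_smul_comm, ← mul_assoc]
  rw [hjxy, hxki, hxjy]
  match_scalars <;> field_simp
  ring

variable {t : F} (ht : t ≠ 0) {xp x0 xm yp y0 ym : R}
  (hxp : k * xp * ki = t • xp) (hx0 : k * x0 * ki = x0) (hxm : k * xm * ki = t⁻¹ • xm)
  (hyp : k * yp * ki = t • yp) (hy0 : k * y0 * ki = y0) (hym : k * ym * ki = t⁻¹ • ym)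
include ht hxp hx0 hxm hyp hy0 hym

theorem conj_quantumScalarProduct :
    k * quantumScalarProduct t xp x0 xm yp y0 ym * ki =
      quantumScalarProduct t xp x0 xm yp y0 ym := by
  have hx0' : k * x0 * ki = (1 : F) • x0 := by rw [one_smul, hx0]
  have hy0' : k * y0 * ki = (1 : F) • y0 := by rw [one_smul, hy0]
  simp only [quantumScalarProduct, mul_add, mul_sub, add_mul, sub_mul, mul_smul_comm,
    smul_mul_assoc, conj_mul_eq_smul hkik hxp hym, conj_mul_eq_smul hkik hx0' hy0',
    conj_mul_eq_smul hkik hxm hyp]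
  match_scalars <;> field_simp

theorem twistedAd_quantumScalarProduct {j : R} {c : F} (hj : k * j * ki = t • j)
    (hadxp : twistedAd ki j t xp = 0) (hadx0 : twistedAd ki j t x0 = c • xp)
    (hadxm : twistedAd ki j t xm = c • x0)
    (hadyp : twistedAd ki j t yp = 0) (hady0 : twistedAd ki j t y0 = c • yp)
    (hadym : twistedAd ki j t ym = c • y0) :
    twistedAd ki j t (quantumScalarProduct t xp x0 xm yp y0 ym) = 0 := by
  have hx0' : k * x0 * ki = (1 : F) • x0 := by rw [one_smul, hx0]
  have hy0' : k * y0 * ki = (1 : F) • y0 := by rw [one_smul, hy0]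
  rw [quantumScalarProduct, map_add, map_sub, map_smul, map_smul,
    twistedAd_mul hkik ht hj hxp hym, twistedAd_mul hkik one_ne_zero hj hx0' hy0',
    twistedAd_mul hkik (inv_ne_zero ht) hj hxm hyp, hadxp, hadx0, hadxm, hadyp, hady0, hadym]
  simp only [zero_mul, mul_zero, smul_zero, zero_add, add_zero, smul_mul_assoc, mul_smul_comm]
  match_scalars <;> simp [ht]

end Weights

theorem scalar_product_of_vector_operators_is_scalar_general (s c : F)
    (hs : s ≠ 0)
    (k ki jp jm : R)
    (hkik : ki * k = 1)
    (hjp : k * jp * ki = s • jp) (hjm : k * jm * ki = s⁻¹ • jm)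
    -- τ is a vector operator
    (τm τ0 τ1 : R)
    (hτK1 : k * τ1 * ki = s • τ1) (hτK0 : k * τ0 * ki = τ0) (hτKm : k * τm * ki = s⁻¹ • τm)
    (hτpm : jp * τm * ki - s • (ki * τm * jp) = c • τ0)
    (hτp0 : jp * τ0 * ki - s • (ki * τ0 * jp) = c • τ1)
    (hτp1 : jp * τ1 * ki - s • (ki * τ1 * jp) = 0)
    (hτm1 : jm * τ1 * ki - s⁻¹ • (ki * τ1 * jm) = c • τ0)
    (hτm0 : jm * τ0 * ki - s⁻¹ • (ki * τ0 * jm) = c • τm)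
    (hτmm : jm * τm * ki - s⁻¹ • (ki * τm * jm) = 0)
    -- τ' is a vector operator
    (τ'm τ'0 τ'1 : R)
    (hτ'K1 : k * τ'1 * ki = s • τ'1) (hτ'K0 : k * τ'0 * ki = τ'0)
    (hτ'Km : k * τ'm * ki = s⁻¹ • τ'm)
    (hτ'pm : jp * τ'm * ki - s • (ki * τ'm * jp) = c • τ'0)
    (hτ'p0 : jp * τ'0 * ki - s • (ki * τ'0 * jp) = c • τ'1)
    (hτ'p1 : jp * τ'1 * ki - s • (ki * τ'1 * jp) = 0)
    (hτ'm1 : jm * τ'1 * ki - s⁻¹ • (ki * τ'1 * jm) = c • τ'0)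
    (hτ'm0 : jm * τ'0 * ki - s⁻¹ • (ki * τ'0 * jm) = c • τ'm)
    (hτ'mm : jm * τ'm * ki - s⁻¹ • (ki * τ'm * jm) = 0)
    -- the quantum scalar product
    (O : R) (hO : O = s • (τ1 * τ'm) - τ0 * τ'0 + s⁻¹ • (τm * τ'1)) :
    k * O * ki = O ∧
    jp * O * ki - s • (ki * O * jp) = 0 ∧
    jm * O * ki - s⁻¹ • (ki * O * jm) = 0 := by
  replace hO : O = quantumScalarProduct s τ1 τ0 τm τ'1 τ'0 τ'm := hO
  subst hO
  have hτK1' : k * τ1 * ki = s⁻¹⁻¹ • τ1 := by rwa [inv_inv]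
  have hτ'K1' : k * τ'1 * ki = s⁻¹⁻¹ • τ'1 := by rwa [inv_inv]
  refine ⟨conj_quantumScalarProduct hkik hs hτK1 hτK0 hτKm hτ'K1 hτ'K0 hτ'Km,
    twistedAd_quantumScalarProduct hkik hs hτK1 hτK0 hτKm hτ'K1 hτ'K0 hτ'Km hjp
      hτp1 hτp0 hτpm hτ'p1 hτ'p0 hτ'pm, ?_⟩
  -- the `j₋` case is the `j₊` case for `s⁻¹`, with the components of `τ` and `τ'` reversed
  rw [← quantumScalarProduct_inv]
  exact twistedAd_quantumScalarProduct hkik (inv_ne_zero hs) hτKm hτK0 hτK1' hτ'Km hτ'K0 hτ'K1'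
    hjm hτmm hτm0 hτm1 hτ'mm hτ'm0 hτ'm1

theorem scalar_product_of_vector_operators_is_scalar (s c : F)
    (hs : s ≠ 0) (hs' : s - s⁻¹ ≠ 0) (hc : c ≠ 0) (hc2 : c ^ 2 = s + s⁻¹)
    (k ki jp jm : R)
    (hkki : k * ki = 1) (hkik : ki * k = 1)
    (hjp : k * jp * ki = s • jp) (hjm : k * jm * ki = s⁻¹ • jm)
    (hcomm : jp * jm - jm * jp = (s - s⁻¹)⁻¹ • (k ^ 2 - ki ^ 2))
    -- τ is a vector operator
    (τm τ0 τ1 : R)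
    (hτK1 : k * τ1 * ki = s • τ1) (hτK0 : k * τ0 * ki = τ0) (hτKm : k * τm * ki = s⁻¹ • τm)
    (hτpm : jp * τm * ki - s • (ki * τm * jp) = c • τ0)
    (hτp0 : jp * τ0 * ki - s • (ki * τ0 * jp) = c • τ1)
    (hτp1 : jp * τ1 * ki - s • (ki * τ1 * jp) = 0)
    (hτm1 : jm * τ1 * ki - s⁻¹ • (ki * τ1 * jm) = c • τ0)
    (hτm0 : jm * τ0 * ki - s⁻¹ • (ki * τ0 * jm) = c • τm)
    (hτmm : jm * τm * ki - s⁻¹ • (ki * τm * jm) = 0)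
    -- τ' is a vector operator
    (τ'm τ'0 τ'1 : R)
    (hτ'K1 : k * τ'1 * ki = s • τ'1) (hτ'K0 : k * τ'0 * ki = τ'0)
    (hτ'Km : k * τ'm * ki = s⁻¹ • τ'm)
    (hτ'pm : jp * τ'm * ki - s • (ki * τ'm * jp) = c • τ'0)
    (hτ'p0 : jp * τ'0 * ki - s • (ki * τ'0 * jp) = c • τ'1)
    (hτ'p1 : jp * τ'1 * ki - s • (ki * τ'1 * jp) = 0)
    (hτ'm1 : jm * τ'1 * ki - s⁻¹ • (ki * τ'1 * jm) = c • τ'0)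
    (hτ'm0 : jm * τ'0 * ki - s⁻¹ • (ki * τ'0 * jm) = c • τ'm)
    (hτ'mm : jm * τ'm * ki - s⁻¹ • (ki * τ'm * jm) = 0)
    -- the quantum scalar product
    (O : R) (hO : O = s • (τ1 * τ'm) - τ0 * τ'0 + s⁻¹ • (τm * τ'1)) :
    k * O * ki = O ∧
    jp * O * ki - s • (ki * O * jp) = 0 ∧
    jm * O * ki - s⁻¹ • (ki * O * jm) = 0 :=
  scalar_product_of_vector_operators_is_scalar_general s c hs k ki jp jm hkik hjp hjm τm τ0 τ1 hτK1
    hτK0 hτKm hτpm hτp0 hτp1 hτm1 hτm0 hτmm τ'm τ'0 τ'1 hτ'K1 hτ'K0 hτ'Km hτ'pm hτ'p0 hτ'p1 hτ'm1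
    hτ'm0 hτ'mm O hO
end

section
/- Fix a real number q > 0 with q ≠ 1 and a half-integer j ≥ 0. On the spin-j representation of U_q(su(2)), the quantum squared norm of the vector operator t equals a multiple of the identity: Σ_{m = −1,0,1} (−1)^{1−m} q^{m/2} t_m t_{−m} = −([2j][2j+2]/[2]) · Id, i.e. −q^{1/2} t₁ t₋₁ − t₀² − q^{−1/2} t₋₁ t₁ = −([2j][2j+2]/[2]) · Id. -/
/-!
J₊ is a weighted lower shift and J₋ is its transpose, so J₊J₋ and J₋J₊ are diagonal with entries
[j+m][j−m+1] and [j−m][j+m+1], and t₀ is diagonal as well. Commuting K past J± (K J₊ = q^{1/2} J₊ K)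
turns q^{1/2} t₁t₋₁ + q^{−1/2} t₋₁t₁ into −K²(J₊J₋ + J₋J₊), so the whole operator is diagonal.
Its entry at m = (x − y)/2, x + y = 2j, is a rational identity in q^{x/2}, q^{y/2} and q^{1/2}.
-/

noncomputable section

/-- The q-number [x] = (q^{x/2} − q^{−x/2})/(q^{1/2} − q^{−1/2}). -/
def qnum (q x : ℝ) : ℝ :=
  (q ^ (x / 2) - q ^ (-x / 2)) / (q ^ ((1 : ℝ) / 2) - q ^ (-(1 : ℝ) / 2))

/-- The magnetic number m = i − j attached to the basis index i, where j = n/2. -/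
def mval (n : ℕ) (i : Fin (n + 1)) : ℝ := ((i : ℕ) : ℝ) - (n : ℝ) / 2

/-- The operator K of the spin-(n/2) representation. -/
def Kmat (q : ℝ) (n : ℕ) : Matrix (Fin (n + 1)) (Fin (n + 1)) ℝ :=
  Matrix.diagonal fun i => q ^ (mval n i / 2)

/-- The operator K⁻¹ of the spin-(n/2) representation. -/
def Kinvmat (q : ℝ) (n : ℕ) : Matrix (Fin (n + 1)) (Fin (n + 1)) ℝ :=
  Matrix.diagonal fun i => q ^ (-(mval n i) / 2)

/-- The raising operator J₊ of the spin-(n/2) representation: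
J₊ e_m = √([j−m][j+m+1]) e_{m+1}. -/
def Jpmat (q : ℝ) (n : ℕ) : Matrix (Fin (n + 1)) (Fin (n + 1)) ℝ :=
  Matrix.of fun i i' =>
    if (i : ℕ) = (i' : ℕ) + 1 then
      Real.sqrt (qnum q ((n : ℝ) - ((i' : ℕ) : ℝ)) * qnum q (((i' : ℕ) : ℝ) + 1))
    else 0

/-- The lowering operator J₋ of the spin-(n/2) representation:
J₋ e_m = √([j+m][j−m+1]) e_{m−1}. -/
def Jmmat (q : ℝ) (n : ℕ) : Matrix (Fin (n + 1)) (Fin (n + 1)) ℝ :=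
  Matrix.of fun i i' =>
    if (i : ℕ) + 1 = (i' : ℕ) then
      Real.sqrt (qnum q (((i' : ℕ) : ℝ)) * qnum q ((n : ℝ) - ((i' : ℕ) : ℝ) + 1))
    else 0

/-- The component t₁ = K J₊ of the vector operator t. -/
def tOne (q : ℝ) (n : ℕ) : Matrix (Fin (n + 1)) (Fin (n + 1)) ℝ :=
  Kmat q n * Jpmat q n

/-- The component t₀ = −(q^{−1/2} J₊J₋ − q^{1/2} J₋J₊)/√[2] of the vector operator t. -/
def tZero (q : ℝ) (n : ℕ) : Matrix (Fin (n + 1)) (Fin (n + 1)) ℝ :=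
  -((Real.sqrt (qnum q 2))⁻¹ •
    (q ^ (-(1 : ℝ) / 2) • (Jpmat q n * Jmmat q n) - q ^ ((1 : ℝ) / 2) • (Jmmat q n * Jpmat q n)))

/-- The component t₋₁ = −K J₋ of the vector operator t. -/
def tNegOne (q : ℝ) (n : ℕ) : Matrix (Fin (n + 1)) (Fin (n + 1)) ℝ :=
  -(Kmat q n * Jmmat q n)

open scoped Matrix

theorem qnum_zero (q : ℝ) : qnum q 0 = 0 := by
  simp [qnum]

theorem qnum_nonneg {q : ℝ} (hq : 0 < q) {x : ℝ} (hx : 0 ≤ x) : 0 ≤ qnum q x := by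
  rcases lt_trichotomy q 1 with h | rfl | h
  · refine div_nonneg_of_nonpos (sub_nonpos.2 ?_) (sub_nonpos.2 ?_) <;>
      exact Real.rpow_le_rpow_of_exponent_ge hq h.le (by linarith)
  · simp [qnum]
  · refine div_nonneg (sub_nonneg.2 ?_) (sub_nonneg.2 ?_) <;>
      exact Real.rpow_le_rpow_of_exponent_le h.le (by linarith)

def qfrac (s t : ℝ) : ℝ := (t - t⁻¹) / (s - s⁻¹)

theorem qnum_eq_qfrac {q : ℝ} (hq : 0 < q) (x : ℝ) :
    qnum q x = qfrac (q ^ ((1 : ℝ) / 2)) (q ^ (x / 2)) := by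
  rw [qnum, qfrac, neg_div, Real.rpow_neg hq.le, neg_div, Real.rpow_neg hq.le]

theorem qfrac_casimir {s : ℝ} (hs : 0 < s) (hs1 : s ≠ 1) {a b : ℝ} (ha : a ≠ 0) (hb : b ≠ 0) :
    a / b * (qfrac s a * qfrac s (b * s) + qfrac s (a * s) * qfrac s b)
      + (s⁻¹ * (qfrac s a * qfrac s (b * s)) - s * (qfrac s (a * s) * qfrac s b)) ^ 2
        / qfrac s (s * s)
    = qfrac s (a * b) * qfrac s (a * b * (s * s)) / qfrac s (s * s) := by
  have hss : s ^ 2 - 1 ≠ 0 := by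
    intro h; apply hs1; nlinarith [sq_nonneg (s - 1)]
  have hss' : s ^ 2 + 1 ≠ 0 := by positivity
  have hd : s - s⁻¹ = (s ^ 2 - 1) / s := by field_simp
  have h2 : qfrac s (s * s) = (s ^ 2 + 1) / s := by
    rw [qfrac, hd]; field_simp; ring
  rw [h2]
  simp only [qfrac, hd]
  field_simp
  ring

theorem qnum_casimir {q : ℝ} (hq : 0 < q) (hq1 : q ≠ 1) (x y : ℝ) :
    q ^ ((x - y) / 2) * (qnum q x * qnum q (y + 1) + qnum q (x + 1) * qnum q y)
      + (q ^ (-(1 : ℝ) / 2) * (qnum q x * qnum q (y + 1))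
          - q ^ ((1 : ℝ) / 2) * (qnum q (x + 1) * qnum q y)) ^ 2 / qnum q 2
    = qnum q (x + y) * qnum q (x + y + 2) / qnum q 2 := by
  have hpow (u v : ℝ) : q ^ ((u + v) / 2) = q ^ (u / 2) * q ^ (v / 2) := by
    rw [add_div, Real.rpow_add hq]
  have h2 : q ^ ((2 : ℝ) / 2) = q ^ ((1 : ℝ) / 2) * q ^ ((1 : ℝ) / 2) := by
    rw [← hpow]; norm_num
  simp only [qnum_eq_qfrac hq]
  rw [hpow x 1, hpow y 1, hpow (x + y) 2, hpow x y, h2, sub_div, Real.rpow_sub hq,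
    neg_div, Real.rpow_neg hq.le]
  refine qfrac_casimir (by positivity) (fun h => hq1 ?_) (by positivity) (by positivity)
  rwa [h, mul_one, div_self two_ne_zero, Real.rpow_one] at h2

section Shift

variable {R : Type*} [Semiring R]

def lowerShift (n : ℕ) (w : ℕ → R) : Matrix (Fin (n + 1)) (Fin (n + 1)) R :=
  Matrix.of fun i i' => if (i : ℕ) = (i' : ℕ) + 1 then w i else 0

theorem lowerShift_mul_transpose {n : ℕ} {w : ℕ → R} (hw : w 0 = 0) :
    lowerShift n w * (lowerShift n w)ᵀ = Matrix.diagonal fun i : Fin (n + 1) => w i * w i := by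
  ext i k
  simp only [Matrix.mul_apply, Matrix.transpose_apply, lowerShift, Matrix.of_apply, ite_mul,
    zero_mul, mul_ite, mul_zero, Matrix.diagonal_apply]
  rcases i with ⟨_ | i, hi⟩
  · simp [hw]
  · rw [Finset.sum_eq_single ⟨i, by omega⟩ (fun l _ hl => ?_) (by simp)] <;> grind

theorem transpose_mul_lowerShift {n : ℕ} {w : ℕ → R} (hw : w (n + 1) = 0) :
    (lowerShift n w)ᵀ * lowerShift n w
      = Matrix.diagonal fun i : Fin (n + 1) => w (i + 1) * w (i + 1) := by
  ext i k
  simp only [Matrix.mul_apply, Matrix.transpose_apply, lowerShift, Matrix.of_apply, ite_mul,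
    zero_mul, mul_ite, mul_zero, Matrix.diagonal_apply]
  by_cases hi : (i : ℕ) = n
  · rw [Finset.sum_eq_zero (fun l _ => ?_)] <;> grind
  · rw [Finset.sum_eq_single ⟨i + 1, by omega⟩ (fun l _ hl => ?_) (by simp)] <;> grind

end Shift

theorem mul_diagonal_eq_smul_diagonal_mul {R ι : Type*} [CommSemiring R] [Fintype ι]
    [DecidableEq ι] {M : Matrix ι ι R} {d : ι → R} {c : R}
    (h : ∀ i j, M i j ≠ 0 → d j = c * d i) :
    M * Matrix.diagonal d = c • (Matrix.diagonal d * M) := by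
  ext i j
  rw [Matrix.mul_diagonal, Matrix.smul_apply, Matrix.diagonal_mul, smul_eq_mul]
  by_cases hM : M i j = 0
  · simp [hM]
  · rw [h i j hM]; ring

def jWeight (q : ℝ) (n : ℕ) (i : ℕ) : ℝ :=
  √(qnum q ((n : ℝ) - i + 1) * qnum q i)

theorem Jpmat_eq_lowerShift (q : ℝ) (n : ℕ) : Jpmat q n = lowerShift n (jWeight q n) := by
  ext i j
  simp only [Jpmat, lowerShift, Matrix.of_apply, jWeight]
  split_ifs with h
  · rw [h]; push_cast; ring_nf
  · rfl

theorem Jmmat_eq_transpose (q : ℝ) (n : ℕ) : Jmmat q n = (lowerShift n (jWeight q n))ᵀ := by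
  ext i j
  simp only [Jmmat, lowerShift, Matrix.transpose_apply, Matrix.of_apply, jWeight,
    eq_comm (a := (j : ℕ))]
  split_ifs
  · rw [mul_comm]
  · rfl

theorem Jpmat_mul_Jmmat {q : ℝ} (hq : 0 < q) (n : ℕ) :
    Jpmat q n * Jmmat q n = Matrix.diagonal fun i : Fin (n + 1) =>
      qnum q (i : ℕ) * qnum q ((n : ℝ) - (i : ℕ) + 1) := by
  rw [Jpmat_eq_lowerShift, Jmmat_eq_transpose,
    lowerShift_mul_transpose (by simp [jWeight, qnum_zero])]
  congr 1; funext i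
  have hi : ((i : ℕ) : ℝ) ≤ n := by exact_mod_cast Fin.is_le i
  rw [jWeight, Real.mul_self_sqrt (mul_nonneg (qnum_nonneg hq (by linarith))
    (qnum_nonneg hq (by positivity))), mul_comm]

theorem Jmmat_mul_Jpmat {q : ℝ} (hq : 0 < q) (n : ℕ) :
    Jmmat q n * Jpmat q n = Matrix.diagonal fun i : Fin (n + 1) =>
      qnum q ((i : ℕ) + 1) * qnum q ((n : ℝ) - (i : ℕ)) := by
  rw [Jpmat_eq_lowerShift, Jmmat_eq_transpose,
    transpose_mul_lowerShift (by simp [jWeight, qnum_zero])]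
  congr 1; funext i
  have hi : ((i : ℕ) : ℝ) ≤ n := by exact_mod_cast Fin.is_le i
  rw [jWeight, Real.mul_self_sqrt (mul_nonneg (qnum_nonneg hq (by push_cast; linarith))
    (qnum_nonneg hq (by positivity))), mul_comm]
  push_cast; ring_nf

theorem rpow_mval_of_succ {q : ℝ} (hq : 0 < q) {n : ℕ} {i j : Fin (n + 1)}
    (h : (i : ℕ) = j + 1) : q ^ (mval n i / 2) = q ^ ((1 : ℝ) / 2) * q ^ (mval n j / 2) := by
  rw [← Real.rpow_add hq, mval, mval, h]; push_cast; ring_nf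

theorem Jpmat_mul_Kmat {q : ℝ} (hq : 0 < q) (n : ℕ) :
    Jpmat q n * Kmat q n = (q ^ ((1 : ℝ) / 2))⁻¹ • (Kmat q n * Jpmat q n) := by
  refine mul_diagonal_eq_smul_diagonal_mul fun i j h => ?_
  simp only [Jpmat, Matrix.of_apply, ne_eq, ite_eq_right_iff, Classical.not_imp] at h
  rw [rpow_mval_of_succ hq h.1, inv_mul_cancel_left₀ (by positivity)]

theorem Jmmat_mul_Kmat {q : ℝ} (hq : 0 < q) (n : ℕ) :
    Jmmat q n * Kmat q n = q ^ ((1 : ℝ) / 2) • (Kmat q n * Jmmat q n) := by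
  refine mul_diagonal_eq_smul_diagonal_mul fun i j h => ?_
  simp only [Jmmat, Matrix.of_apply, ne_eq, ite_eq_right_iff, Classical.not_imp] at h
  exact rpow_mval_of_succ hq h.1.symm

theorem Kmat_mul_Kmat {q : ℝ} (hq : 0 < q) (n : ℕ) :
    Kmat q n * Kmat q n = Matrix.diagonal fun i => q ^ mval n i := by
  rw [Kmat, Matrix.diagonal_mul_diagonal]
  congr 1; funext i
  rw [← Real.rpow_add hq, add_halves]

theorem smul_tOne_mul_tNegOne {q : ℝ} (hq : 0 < q) (n : ℕ) :
    q ^ ((1 : ℝ) / 2) • (tOne q n * tNegOne q n)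
      = -(Kmat q n * Kmat q n * (Jpmat q n * Jmmat q n)) := by
  have hcomm : Kmat q n * Jpmat q n * (Kmat q n * Jmmat q n)
      = (q ^ ((1 : ℝ) / 2))⁻¹ • (Kmat q n * Kmat q n * (Jpmat q n * Jmmat q n)) := by
    simp only [mul_assoc]
    rw [← mul_assoc (Jpmat q n), Jpmat_mul_Kmat hq]
    simp only [Matrix.smul_mul, Matrix.mul_smul, mul_assoc]
  rw [tOne, tNegOne, mul_neg, hcomm, smul_neg, smul_smul, mul_inv_cancel₀ (by positivity),
    one_smul]

theorem smul_tNegOne_mul_tOne {q : ℝ} (hq : 0 < q) (n : ℕ) :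
    q ^ (-(1 : ℝ) / 2) • (tNegOne q n * tOne q n)
      = -(Kmat q n * Kmat q n * (Jmmat q n * Jpmat q n)) := by
  have hcomm : Kmat q n * Jmmat q n * (Kmat q n * Jpmat q n)
      = q ^ ((1 : ℝ) / 2) • (Kmat q n * Kmat q n * (Jmmat q n * Jpmat q n)) := by
    simp only [mul_assoc]
    rw [← mul_assoc (Jmmat q n), Jmmat_mul_Kmat hq]
    simp only [Matrix.smul_mul, Matrix.mul_smul, mul_assoc]
  rw [tOne, tNegOne, neg_mul, hcomm, smul_neg, smul_smul, neg_div, Real.rpow_neg hq.le,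
    inv_mul_cancel₀ (by positivity), one_smul]

theorem tZero_eq_diagonal {q : ℝ} (hq : 0 < q) (n : ℕ) :
    tZero q n = Matrix.diagonal fun i : Fin (n + 1) =>
      -((√(qnum q 2))⁻¹ *
        (q ^ (-(1 : ℝ) / 2) * (qnum q (i : ℕ) * qnum q ((n : ℝ) - (i : ℕ) + 1))
          - q ^ ((1 : ℝ) / 2) * (qnum q ((i : ℕ) + 1) * qnum q ((n : ℝ) - (i : ℕ))))) := by
  ext i j
  rw [tZero, Jpmat_mul_Jmmat hq, Jmmat_mul_Jpmat hq]
  by_cases h : i = j <;> simp [h]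

theorem t_squared_norm (q : ℝ) (hq : 0 < q) (hq1 : q ≠ 1) (n : ℕ) :
    -- Σ_{m = −1,0,1} (−1)^{1−m} q^{m/2} t_m t_{−m} = −([2j][2j+2]/[2]) · Id, with 2j = n
    q ^ ((1 : ℝ) / 2) • (tOne q n * tNegOne q n)
      - tZero q n * tZero q n
      + q ^ (-(1 : ℝ) / 2) • (tNegOne q n * tOne q n)
    = (-(qnum q (n : ℝ) * qnum q ((n : ℝ) + 2) / qnum q 2)) • (1 : Matrix (Fin (n + 1)) (Fin (n + 1)) ℝ) := by
  rw [smul_tOne_mul_tNegOne hq, smul_tNegOne_mul_tOne hq, tZero_eq_diagonal hq,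
    Jpmat_mul_Jmmat hq, Jmmat_mul_Jpmat hq, Kmat_mul_Kmat hq, Matrix.smul_one_eq_diagonal]
  simp only [Matrix.diagonal_mul_diagonal]
  ext i j
  rcases eq_or_ne i j with rfl | hij
  · have hcasimir := qnum_casimir hq hq1 (i : ℕ) ((n : ℝ) - (i : ℕ))
    rw [add_sub_cancel, ← show mval n i = ((i : ℕ) - ((n : ℝ) - (i : ℕ))) / 2 by
      rw [mval]; ring] at hcasimir
    have hsqrt : (√(qnum q 2))⁻¹ ^ 2 = (qnum q 2)⁻¹ := by
      rw [inv_pow, Real.sq_sqrt (qnum_nonneg hq zero_le_two)]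
    simp only [Matrix.add_apply, Matrix.sub_apply, Matrix.neg_apply, Matrix.diagonal_apply_eq]
    set A := qnum q (i : ℕ) * qnum q ((n : ℝ) - (i : ℕ) + 1)
    set B := qnum q ((i : ℕ) + 1) * qnum q ((n : ℝ) - (i : ℕ))
    linear_combination -hcasimir - (q ^ (-(1 : ℝ) / 2) * A - q ^ ((1 : ℝ) / 2) * B) ^ 2 * hsqrt
  · simp [hij]

end
end

section
/- Fix a real number q > 0 with q ≠ 1 and half-integers j₁, j₂ ≥ 0. On the tensor product of the spin-j₁ and spin-j₂ representations, let the daggers be the entrywise dualizations ⟨e_m, X† e_n⟩ = (−1)^{(j+m)+(j+n)} q^{(m−n)/2} ⟨e_{−n}, X e_{−m}⟩ on the respective factors (j = j₁ for the first factor, j = j₂ for the second). Then the adjoint of the invariant pairing reproduces the invariant pairing with the roles of t and t^op exchanged: Σ_{A = −1,0,1} (t^op_{−A})† ⊗ (t_A)† = Σ_{A = −1,0,1} t_{−A} ⊗ t^op_A as operators on ℝ^{2j₁+1} ⊗ ℝ^{2j₂+1}, where in each summand the first factor acts on the spin-j₁ space and the second on the spin-j₂ space. -/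
/-! STATEMENT 15: the adjoint of the invariant pairing exchanges t and t^op. -/

open Kronecker

noncomputable section

/-- The component t^op₁ = J₊ K⁻¹ of the operator t^op. -/
def topOne (q : ℝ) (n : ℕ) : Matrix (Fin (n + 1)) (Fin (n + 1)) ℝ :=
  Jpmat q n * Kinvmat q n

/-- The component t^op₀ = (q^{1/2} J₊J₋ − q^{−1/2} J₋J₊)/√[2] of the operator t^op. -/
def topZero (q : ℝ) (n : ℕ) : Matrix (Fin (n + 1)) (Fin (n + 1)) ℝ :=
  (Real.sqrt (qnum q 2))⁻¹ •
    (q ^ ((1 : ℝ) / 2) • (Jpmat q n * Jmmat q n) - q ^ (-(1 : ℝ) / 2) • (Jmmat q n * Jpmat q n))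

/-- The component t^op₋₁ = −J₋ K⁻¹ of the operator t^op. -/
def topNegOne (q : ℝ) (n : ℕ) : Matrix (Fin (n + 1)) (Fin (n + 1)) ℝ :=
  -(Jmmat q n * Kinvmat q n)

/-- The index flip i ↦ n − i, exchanging e_m and e_{−m}. -/
def flipIdx (n : ℕ) (i : Fin (n + 1)) : Fin (n + 1) := ⟨n - (i : ℕ), by omega⟩

/-- Entrywise dualization:
⟨e_m, X† e_n⟩ = (−1)^{(j+m)+(j+n)} q^{(m−n)/2} ⟨e_{−n}, X e_{−m}⟩. -/
def dualize (q : ℝ) (n : ℕ) (X : Matrix (Fin (n + 1)) (Fin (n + 1)) ℝ) :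
    Matrix (Fin (n + 1)) (Fin (n + 1)) ℝ :=
  Matrix.of fun i i' =>
    (-1 : ℝ) ^ ((i : ℕ) + (i' : ℕ)) * q ^ ((mval n i - mval n i') / 2)
      * X (flipIdx n i') (flipIdx n i)

/-! The dualization `X ↦ X†` is a twisted transpose: it is linear and reverses products
(the signs `(−1)^(i+k)(−1)^(k+i')` and weights `q^((m_i−m_k)/2) q^((m_k−m_i')/2)` telescope).
It exchanges `K` and `K⁻¹` and rescales `J₊ ↦ −s J₊`, `J₋ ↦ −s⁻¹ J₋`. Hence
`t₁† = −s t^op₁`, `t₀† = t^op₀`, `t₋₁† = −s⁻¹ t^op₋₁`, and symmetrically with `t` and `t^op`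
swapped, so in each summand `(t^op_{−A})† ⊗ (t_A)†` the scalars `s` and `s⁻¹` cancel. -/

lemma smul_kronecker_smul_of_mul_eq_one {R m n p r : Type*} [CommSemiring R] {a b : R}
    (hab : a * b = 1) (A : Matrix m n R) (B : Matrix p r R) : (a • A) ⊗ₖ (b • B) = A ⊗ₖ B := by
  rw [Matrix.smul_kronecker, Matrix.kronecker_smul, smul_smul, hab, one_smul]

lemma flipIdx_involutive (n : ℕ) : Function.Involutive (flipIdx n) := fun i => by
  ext
  simp only [flipIdx]
  omega

lemma mval_flipIdx (n : ℕ) (i : Fin (n + 1)) : mval n (flipIdx n i) = -mval n i := by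
  simp only [mval, flipIdx, Nat.cast_sub (Nat.le_of_lt_succ i.isLt)]
  ring

lemma dualize_mul {q : ℝ} (hq : 0 < q) (n : ℕ) (X Y : Matrix (Fin (n + 1)) (Fin (n + 1)) ℝ) :
    dualize q n (X * Y) = dualize q n Y * dualize q n X := by
  ext i i'
  simp only [dualize, Matrix.mul_apply, Matrix.of_apply, Finset.mul_sum]
  refine Fintype.sum_equiv (flipIdx_involutive n).toPerm _ _ fun k => ?_
  simp only [Function.Involutive.coe_toPerm, flipIdx_involutive n k]
  set k' := flipIdx n k
  have hsign : (-1 : ℝ) ^ ((i : ℕ) + k') * (-1) ^ ((k' : ℕ) + i') = (-1) ^ ((i : ℕ) + i') := by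
    rw [← pow_add, show (i : ℕ) + k' + (k' + i') = i + i' + 2 * k' by ring, pow_add, pow_mul]
    norm_num
  have hweight : q ^ ((mval n i - mval n k') / 2) * q ^ ((mval n k' - mval n i') / 2) =
      q ^ ((mval n i - mval n i') / 2) := by
    rw [← Real.rpow_add hq]
    ring_nf
  rw [← hsign, ← hweight]
  ring

lemma dualize_smul (q : ℝ) (n : ℕ) (a : ℝ) (X : Matrix (Fin (n + 1)) (Fin (n + 1)) ℝ) :
    dualize q n (a • X) = a • dualize q n X := by
  ext i i'
  simp only [dualize, Matrix.of_apply, Matrix.smul_apply, smul_eq_mul]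
  ring

lemma dualize_neg (q : ℝ) (n : ℕ) (X : Matrix (Fin (n + 1)) (Fin (n + 1)) ℝ) :
    dualize q n (-X) = -dualize q n X := by
  simpa using dualize_smul q n (-1) X

lemma dualize_sub (q : ℝ) (n : ℕ) (X Y : Matrix (Fin (n + 1)) (Fin (n + 1)) ℝ) :
    dualize q n (X - Y) = dualize q n X - dualize q n Y := by
  ext i i'
  simp only [dualize, Matrix.of_apply, Matrix.sub_apply]
  ring

lemma dualize_diagonal (q : ℝ) (n : ℕ) (d : Fin (n + 1) → ℝ) :
    dualize q n (Matrix.diagonal d) = Matrix.diagonal (d ∘ flipIdx n) := by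
  ext i i'
  by_cases h : i = i'
  · subst h
    simp [dualize, Even.neg_one_pow ⟨(i : ℕ), rfl⟩]
  · simp [dualize, Matrix.diagonal_apply_ne _ h,
      Matrix.diagonal_apply_ne _ ((flipIdx_involutive n).injective.ne (Ne.symm h))]

lemma dualize_Kmat (q : ℝ) (n : ℕ) : dualize q n (Kmat q n) = Kinvmat q n := by
  simp only [Kmat, Kinvmat, dualize_diagonal, Function.comp_def, mval_flipIdx]

lemma dualize_Kinvmat (q : ℝ) (n : ℕ) : dualize q n (Kinvmat q n) = Kmat q n := by
  simp only [Kmat, Kinvmat, dualize_diagonal, Function.comp_def, mval_flipIdx, neg_neg]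

/-- The coefficient `√([j−m][j+m+1])` of the edge `m → m+1` is invariant under `m ↦ −m−1`,
which is what the flip does to that edge. -/
lemma dualize_Jpmat (q : ℝ) (n : ℕ) :
    dualize q n (Jpmat q n) = -q ^ ((1 : ℝ) / 2) • Jpmat q n := by
  ext i i'
  have hi := i.isLt
  simp only [dualize, Jpmat, Matrix.of_apply, Matrix.smul_apply, smul_eq_mul, flipIdx]
  by_cases h : (i : ℕ) = i' + 1
  · rw [if_pos (by omega), if_pos h, Odd.neg_one_pow ⟨i', by omega⟩]
    have hcast : ((i : ℕ) : ℝ) = (i' : ℕ) + 1 := by exact_mod_cast h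
    simp only [mval, Nat.cast_sub (Nat.le_of_lt_succ hi), hcast]
    ring_nf
  · rw [if_neg (by omega), if_neg h]
    ring

lemma dualize_Jmmat (q : ℝ) (n : ℕ) :
    dualize q n (Jmmat q n) = -q ^ (-(1 : ℝ) / 2) • Jmmat q n := by
  ext i i'
  have hi := i.isLt
  simp only [dualize, Jmmat, Matrix.of_apply, Matrix.smul_apply, smul_eq_mul, flipIdx]
  by_cases h : (i : ℕ) + 1 = i'
  · rw [if_pos (by omega), if_pos h, Odd.neg_one_pow ⟨i, by omega⟩]
    have hcast : ((i' : ℕ) : ℝ) = (i : ℕ) + 1 := by exact_mod_cast h.symm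
    simp only [mval, Nat.cast_sub (Nat.le_of_lt_succ hi), hcast]
    ring_nf
  · rw [if_neg (by omega), if_neg h]
    ring

lemma rpow_neg_half_mul_rpow_half {q : ℝ} (hq : 0 < q) :
    -q ^ (-(1 : ℝ) / 2) * -q ^ ((1 : ℝ) / 2) = 1 := by
  rw [neg_mul_neg, ← Real.rpow_add hq]
  norm_num

lemma dualize_Jpmat_mul_Jmmat {q : ℝ} (hq : 0 < q) (n : ℕ) :
    dualize q n (Jpmat q n * Jmmat q n) = Jmmat q n * Jpmat q n := by
  rw [dualize_mul hq, dualize_Jpmat, dualize_Jmmat, Matrix.smul_mul, Matrix.mul_smul, smul_smul,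
    rpow_neg_half_mul_rpow_half hq, one_smul]

lemma dualize_Jmmat_mul_Jpmat {q : ℝ} (hq : 0 < q) (n : ℕ) :
    dualize q n (Jmmat q n * Jpmat q n) = Jpmat q n * Jmmat q n := by
  rw [dualize_mul hq, dualize_Jpmat, dualize_Jmmat, Matrix.smul_mul, Matrix.mul_smul, smul_smul,
    mul_comm, rpow_neg_half_mul_rpow_half hq, one_smul]

lemma dualize_tOne {q : ℝ} (hq : 0 < q) (n : ℕ) :
    dualize q n (tOne q n) = -q ^ ((1 : ℝ) / 2) • topOne q n := by
  rw [tOne, dualize_mul hq, dualize_Kmat, dualize_Jpmat, topOne, Matrix.smul_mul]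

lemma dualize_tZero {q : ℝ} (hq : 0 < q) (n : ℕ) : dualize q n (tZero q n) = topZero q n := by
  rw [tZero, dualize_neg, dualize_smul, dualize_sub, dualize_smul, dualize_smul,
    dualize_Jpmat_mul_Jmmat hq, dualize_Jmmat_mul_Jpmat hq, topZero, ← smul_neg, neg_sub]

lemma dualize_tNegOne {q : ℝ} (hq : 0 < q) (n : ℕ) :
    dualize q n (tNegOne q n) = -q ^ (-(1 : ℝ) / 2) • topNegOne q n := by
  rw [tNegOne, dualize_neg, dualize_mul hq, dualize_Kmat, dualize_Jmmat, topNegOne,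
    Matrix.smul_mul, smul_neg]

lemma dualize_topOne {q : ℝ} (hq : 0 < q) (n : ℕ) :
    dualize q n (topOne q n) = -q ^ ((1 : ℝ) / 2) • tOne q n := by
  rw [topOne, dualize_mul hq, dualize_Kinvmat, dualize_Jpmat, tOne, Matrix.mul_smul]

lemma dualize_topZero {q : ℝ} (hq : 0 < q) (n : ℕ) : dualize q n (topZero q n) = tZero q n := by
  rw [topZero, dualize_smul, dualize_sub, dualize_smul, dualize_smul,
    dualize_Jpmat_mul_Jmmat hq, dualize_Jmmat_mul_Jpmat hq, tZero, ← smul_neg, neg_sub]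

lemma dualize_topNegOne {q : ℝ} (hq : 0 < q) (n : ℕ) :
    dualize q n (topNegOne q n) = -q ^ (-(1 : ℝ) / 2) • tNegOne q n := by
  rw [topNegOne, dualize_neg, dualize_mul hq, dualize_Kinvmat, dualize_Jmmat, tNegOne,
    Matrix.mul_smul, smul_neg]

theorem adjoint_pairing_exchanges_t_and_top_general (q : ℝ) (hq : 0 < q)
    (n₁ n₂ : ℕ) :
    -- Σ_A (t^op_{−A})† ⊗ (t_A)† = Σ_A t_{−A} ⊗ t^op_A
    dualize q n₁ (topOne q n₁) ⊗ₖ dualize q n₂ (tNegOne q n₂)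
      + dualize q n₁ (topZero q n₁) ⊗ₖ dualize q n₂ (tZero q n₂)
      + dualize q n₁ (topNegOne q n₁) ⊗ₖ dualize q n₂ (tOne q n₂)
    = tOne q n₁ ⊗ₖ topNegOne q n₂
      + tZero q n₁ ⊗ₖ topZero q n₂
      + tNegOne q n₁ ⊗ₖ topOne q n₂ := by
  have hs : -q ^ ((1 : ℝ) / 2) * -q ^ (-(1 : ℝ) / 2) = 1 :=
    (mul_comm _ _).trans (rpow_neg_half_mul_rpow_half hq)
  rw [dualize_topOne hq, dualize_tNegOne hq, dualize_topZero hq, dualize_tZero hq,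
    dualize_topNegOne hq, dualize_tOne hq, smul_kronecker_smul_of_mul_eq_one hs,
    smul_kronecker_smul_of_mul_eq_one (rpow_neg_half_mul_rpow_half hq)]

theorem adjoint_pairing_exchanges_t_and_top (q : ℝ) (hq : 0 < q) (hq1 : q ≠ 1)
    (n₁ n₂ : ℕ) :
    -- Σ_A (t^op_{−A})† ⊗ (t_A)† = Σ_A t_{−A} ⊗ t^op_A
    dualize q n₁ (topOne q n₁) ⊗ₖ dualize q n₂ (tNegOne q n₂)
      + dualize q n₁ (topZero q n₁) ⊗ₖ dualize q n₂ (tZero q n₂)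
      + dualize q n₁ (topNegOne q n₁) ⊗ₖ dualize q n₂ (tOne q n₂)
    = tOne q n₁ ⊗ₖ topNegOne q n₂
      + tZero q n₁ ⊗ₖ topZero q n₂
      + tNegOne q n₁ ⊗ₖ topOne q n₂ :=
  adjoint_pairing_exchanges_t_and_top_general q hq n₁ n₂

end
end

section
/- Let u, ũ be 2×2 complex unitary matrices and ℓ, ℓ̃ arbitrary 2×2 complex matrices satisfying the ribbon edge constraint ℓ u = ũ ℓ̃. Then ℓ ℓ† = ũ (ℓ̃ ℓ̃†) ũ⁻¹ and ℓ† ℓ = u (ℓ̃† ℓ̃) u⁻¹, where † denotes the conjugate transpose. Consequently the vectors built from these quadratic combinations satisfy the parallel-transport relations R(ũ) T̃ = T and R(u) T̃^op = T^op used in the Hamiltonian constraint, where T = tr(ℓℓ† σ⃗), T^op = tr(ℓ†ℓ σ⃗), T̃ = tr(ℓ̃ℓ̃† σ⃗), T̃^op = tr(ℓ̃†ℓ̃ σ⃗). -/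
/-!
STATEMENT 19: the ribbon edge constraint ℓ u = ũ ℓ̃ implies the parallel-transport
relations ℓℓ† = ũ (ℓ̃ℓ̃†) ũ⁻¹ and ℓ†ℓ = u (ℓ̃†ℓ̃) u⁻¹, hence R(ũ) T̃ = T and
R(u) T̃^op = T^op componentwise against the Pauli matrices.
-/

open Matrix

/-- The Pauli matrices σ_x, σ_y, σ_z. -/
def pauli : Set (Matrix (Fin 2) (Fin 2) ℂ) :=
  {!![0, 1; 1, 0], !![0, -Complex.I; Complex.I, 0], !![1, 0; 0, -1]}

theorem ribbon_edge_parallel_transport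
    (u ut l lt : Matrix (Fin 2) (Fin 2) ℂ)
    (hu : u ∈ Matrix.unitaryGroup (Fin 2) ℂ)
    (hut : ut ∈ Matrix.unitaryGroup (Fin 2) ℂ)
    (h : l * u = ut * lt) :
    l * lᴴ = ut * (lt * ltᴴ) * ut⁻¹ ∧
    lᴴ * l = u * (ltᴴ * lt) * u⁻¹ ∧
    ∀ σ ∈ pauli,
      Matrix.trace (ut * (lt * ltᴴ) * ut⁻¹ * σ) = Matrix.trace (l * lᴴ * σ) ∧
      Matrix.trace (u * (ltᴴ * lt) * u⁻¹ * σ) = Matrix.trace (lᴴ * l * σ) := by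
  have hu1 : u * uᴴ = 1 := by
    simpa [Matrix.star_eq_conjTranspose] using (Matrix.mem_unitaryGroup_iff).mp hu
  have hu2 : uᴴ * u = 1 := by
    simpa [Matrix.star_eq_conjTranspose] using (Matrix.mem_unitaryGroup_iff').mp hu
  have hut1 : ut * utᴴ = 1 := by
    simpa [Matrix.star_eq_conjTranspose] using (Matrix.mem_unitaryGroup_iff).mp hut
  have hut2 : utᴴ * ut = 1 := by
    simpa [Matrix.star_eq_conjTranspose] using (Matrix.mem_unitaryGroup_iff').mp hut
  have hiu : u⁻¹ = uᴴ := Matrix.inv_eq_right_inv hu1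
  have hiut : ut⁻¹ = utᴴ := Matrix.inv_eq_right_inv hut1
  have hl : l = ut * lt * uᴴ := by
    calc l = l * u * uᴴ := by rw [mul_assoc, hu1, mul_one]
    _ = ut * lt * uᴴ := by rw [h]
  have h1 : l * lᴴ = ut * (lt * ltᴴ) * ut⁻¹ := by
    rw [hiut, hl]
    simp only [Matrix.conjTranspose_mul, Matrix.conjTranspose_conjTranspose]
    calc ut * lt * uᴴ * (u * (ltᴴ * utᴴ))
        = ut * lt * (uᴴ * u) * (ltᴴ * utᴴ) := by simp [mul_assoc]
      _ = ut * (lt * ltᴴ) * utᴴ := by rw [hu2]; simp [mul_assoc]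
  have h2 : lᴴ * l = u * (ltᴴ * lt) * u⁻¹ := by
    rw [hiu, hl]
    simp only [Matrix.conjTranspose_mul, Matrix.conjTranspose_conjTranspose]
    calc u * (ltᴴ * utᴴ) * (ut * lt * uᴴ)
        = u * ltᴴ * (utᴴ * ut) * lt * uᴴ := by simp [mul_assoc]
      _ = u * (ltᴴ * lt) * uᴴ := by rw [hut2]; simp [mul_assoc]
  exact ⟨h1, h2, fun σ _ => ⟨by rw [h1], by rw [h2]⟩⟩
end
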